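/- arXiv:1509.03584 — 7 statements merged into one kernel-verified Lean document; each statement's English description precedes it below -/
import Mathlib

section
/- Let Δ be a countable group with a measure-preserving action on a standard probability space (X,μ) such that for μ-a.e. x the orbit Δ·x is infinite (the orbit equivalence relation is aperiodic). Let Γ be a countable group of measure-preserving measurable bijections of X such that every γ ∈ Γ satisfies γ(x) ∈ Δ·x for μ-a.e. x, and such that Γ is dense in the full group of the Δ-orbit equivalence relation: for every measure-preserving measurable bijection T of X with T(x) ∈ Δ·x for μ-a.e. x and every ε > 0 there exists γ ∈ Γ with μ({x : T(x) ≠ γ(x)}) < ε. Then the Γ-action on X is totally non free: there is a conull measurable set X₀ ⊆ X on which the stabilizer map x ↦ {γ ∈ Γ : γ(x) = x} is injective. -/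
open MeasureTheory Set Filter Function
open scoped ENNReal

/-!
Given `x ≠ x'` we look for an element of `G` that fixes `x` but moves `x'`. Take `U` from a
countable separating family of measurable sets with `x' ∈ U`, `x ∉ U`. The points of `U` whose
orbit meets `U` only in themselves form a partial transversal `B`. Enumerate `Δ` as
`e 0, e 1, …` and let `Cₙ` be the set of `b ∈ B` for which `e n • b` differs from all `e m • b`,
`m < n`; the translates `e n • Cₙ` are disjoint, so by Borel–Cantelli almost no point of `B`
has an infinite orbit. Hence some `δ` sends `x'` to another point of `U`, and a second
separating set `V` distinguishes `x'` from `δ • x'`. The involution exchanging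
`S = {y ∈ U ∩ V | δ • y ∈ U \ V}` with `δ • S` lies in the full group, is the identity off `U`
and moves `x'`. By density and Borel–Cantelli it is the a.e. pointwise limit of a sequence in
`G`; there are countably many triples `(U, V, δ)`, so one conull set serves all of them, and a
late term of the sequence fixes `x` but moves `x'`.
-/

theorem exists_measurableSet_separating (X : Type*) [MeasurableSpace X]
    [MeasurableSpace.CountablySeparated X] :
    ∃ s : ℕ × Bool → Set X, (∀ i, MeasurableSet (s i)) ∧
      ∀ x y, x ≠ y → ∃ i, x ∈ s i ∧ y ∉ s i := by
  obtain ⟨f, hf, hinj⟩ := MeasurableSpace.measurable_injection_nat_bool_of_countablySeparated X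
  refine ⟨fun i => {z | f z i.1 = i.2}, fun i => ?_, fun x y hxy => ?_⟩
  · exact (measurable_pi_apply i.1).comp hf (measurableSet_singleton i.2)
  · obtain ⟨n, hn⟩ := Function.ne_iff.mp (hinj.ne hxy)
    exact ⟨(n, f x n), rfl, Ne.symm hn⟩

theorem exists_seq_ae_eventually_eq {α β ι : Type*} [MeasurableSpace α] {μ : Measure α}
    (g : ι → α → β) (f : α → β) (h : ∀ ε : ℝ≥0∞, 0 < ε → ∃ i, μ {x | f x ≠ g i x} < ε) :
    ∃ u : ℕ → ι, ∀ᵐ x ∂μ, ∀ᶠ k in atTop, g (u k) x = f x := by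
  obtain ⟨ε, hε, hsum⟩ := ENNReal.exists_pos_sum_of_countable' one_ne_zero ℕ
  choose u hu using fun k => h (ε k) (hε k)
  have hfin : ∑' k, μ {x | f x ≠ g (u k) x} ≠ ∞ :=
    ((ENNReal.tsum_le_tsum fun k => (hu k).le).trans_lt (hsum.trans ENNReal.one_lt_top)).ne
  refine ⟨u, ?_⟩
  filter_upwards [ae_eventually_notMem hfin] with x hx
  filter_upwards [hx] with k hk
  exact (not_not.mp hk).symm

theorem Set.Infinite.setOf_forall_lt_ne {α : Type*} {h : ℕ → α} (hinf : (range h).Infinite) :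
    {n | ∀ m < n, h m ≠ h n}.Infinite := by
  classical
  refine fun hfin => hinf ((hfin.image h).subset ?_)
  rintro _ ⟨n, rfl⟩
  have hex : ∃ k, h k = h n := ⟨n, rfl⟩
  exact ⟨Nat.find hex, fun m hm => by rw [Nat.find_spec hex]; exact Nat.find_min hex hm,
    Nat.find_spec hex⟩

theorem measure_eq_inter_add_inter_add_diff {α : Type*} [MeasurableSpace α] (μ : Measure α)
    {S T F : Set α} (hST : Disjoint S T) (hS : MeasurableSet S) (hT : MeasurableSet T)
    (hF : MeasurableSet F) : μ F = μ (F ∩ S) + μ (F ∩ T) + μ (F \ (S ∪ T)) := by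
  rw [← measure_union (hST.mono inter_subset_right inter_subset_right) (hF.inter hT),
    ← inter_union_distrib_left, measure_inter_add_sdiff F (hS.union hT)]

namespace MeasurableEquiv

variable {X : Type*} {S : Set X}

open Classical in
noncomputable def swapWithImageFun (f : X ≃ X) (S : Set X) (x : X) : X :=
  if x ∈ S then f x else if f.symm x ∈ S then f.symm x else x

theorem swapWithImageFun_involutive {f : X ≃ X} (hfS : Disjoint S (f ⁻¹' S)) :
    Involutive (swapWithImageFun f S) := by
  intro x
  have hS : ∀ y ∈ S, f y ∉ S := fun y hy => disjoint_left.mp hfS hy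
  by_cases h₁ : x ∈ S
  · simp [swapWithImageFun, h₁, hS x h₁]
  by_cases h₂ : f.symm x ∈ S
  · simp [swapWithImageFun, h₁, h₂]
  · simp [swapWithImageFun, h₁, h₂]

variable [MeasurableSpace X]

theorem measurable_swapWithImageFun (f : X ≃ᵐ X) (hS : MeasurableSet S) :
    Measurable (swapWithImageFun f.toEquiv S) := by
  classical
  exact f.measurable.ite hS (f.symm.measurable.ite (f.symm.measurable hS) measurable_id)

noncomputable def swapWithImage (f : X ≃ᵐ X) (hS : MeasurableSet S)
    (hfS : Disjoint S (f ⁻¹' S)) : X ≃ᵐ X where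
  toEquiv := (swapWithImageFun_involutive (f := f.toEquiv) hfS).toPerm _
  measurable_toFun := measurable_swapWithImageFun f hS
  measurable_invFun := measurable_swapWithImageFun f hS

theorem swapWithImage_apply (f : X ≃ᵐ X) (hS : MeasurableSet S) (hfS : Disjoint S (f ⁻¹' S))
    (x : X) : swapWithImage f hS hfS x = swapWithImageFun f.toEquiv S x :=
  rfl

variable {f : X ≃ᵐ X} {hS : MeasurableSet S} {hfS : Disjoint S (f ⁻¹' S)} {x : X}

theorem swapWithImage_apply_of_mem (hx : x ∈ S) : swapWithImage f hS hfS x = f x := by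
  simp [swapWithImage_apply, swapWithImageFun, hx]

theorem swapWithImage_apply_of_symm_mem (hx : f.symm x ∈ S) :
    swapWithImage f hS hfS x = f.symm x := by
  have : x ∉ S := fun h => disjoint_left.mp hfS hx (by simpa using h)
  simp [swapWithImage_apply, swapWithImageFun, hx, this]

theorem swapWithImage_apply_of_notMem (h₁ : x ∉ S) (h₂ : f.symm x ∉ S) :
    swapWithImage f hS hfS x = x := by
  simp [swapWithImage_apply, swapWithImageFun, h₁, h₂]

theorem swapWithImage_apply_eq_or (x : X) :
    swapWithImage f hS hfS x = f x ∨ swapWithImage f hS hfS x = f.symm x ∨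
      swapWithImage f hS hfS x = x := by
  by_cases h₁ : x ∈ S
  · exact .inl (swapWithImage_apply_of_mem h₁)
  by_cases h₂ : f.symm x ∈ S
  · exact .inr (.inl (swapWithImage_apply_of_symm_mem h₂))
  · exact .inr (.inr (swapWithImage_apply_of_notMem h₁ h₂))

theorem measurePreserving_swapWithImage {μ : Measure X} (hf : MeasurePreserving f μ μ) :
    MeasurePreserving (swapWithImage f hS hfS) μ μ := by
  set θ := swapWithImage f hS hfS
  set T := f.symm ⁻¹' S
  have hT : MeasurableSet T := f.symm.measurable hS
  have hST : Disjoint S T := disjoint_left.mpr fun y hy hy' =>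
    disjoint_left.mp hfS hy' (by simpa [T] using hy)
  refine ⟨θ.measurable, Measure.ext fun E hE => ?_⟩
  have hθE : MeasurableSet (θ ⁻¹' E) := θ.measurable hE
  have hθS : θ ⁻¹' E ∩ S = f ⁻¹' (E ∩ T) := by
    ext y
    by_cases hy : y ∈ S
    · simp [θ, T, hy, swapWithImage_apply_of_mem hy]
    · simp [T, hy]
  have hθT : θ ⁻¹' E ∩ T = f.symm ⁻¹' (E ∩ S) := by
    ext y
    by_cases hy : f.symm y ∈ S
    · simp [θ, T, hy, swapWithImage_apply_of_symm_mem hy]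
    · simp [T, hy]
  have hθR : θ ⁻¹' E \ (S ∪ T) = E \ (S ∪ T) := by
    ext y
    by_cases hy : y ∈ S ∪ T
    · simp [hy]
    · have hy' := not_or.mp hy
      simp [θ, hy, swapWithImage_apply_of_notMem hy'.1 hy'.2]
  rw [Measure.map_apply θ.measurable hE,
    measure_eq_inter_add_inter_add_diff μ hST hS hT hθE, hθS, hθT, hθR,
    hf.measure_preimage (hE.inter hT).nullMeasurableSet,
    hf.symm.measure_preimage (hE.inter hS).nullMeasurableSet,
    measure_eq_inter_add_inter_add_diff μ hST hS hT hE, add_comm (μ (E ∩ T))]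

end MeasurableEquiv

section PartialTransversal

variable {X : Type*} (Δ : Type*) [Group Δ] [MulAction Δ X]

def IsPartialTransversal (B : Set X) : Prop :=
  ∀ x ∈ B, ∀ δ : Δ, δ • x ∈ B → δ • x = x

variable {Δ}

theorem IsPartialTransversal.eq_of_smul_eq_smul {B : Set X} (hB : IsPartialTransversal Δ B)
    {a b : X} (ha : a ∈ B) (hb : b ∈ B) {δ δ' : Δ} (h : δ • a = δ' • b) : a = b := by
  have hab : (δ'⁻¹ * δ) • a = b := by rw [mul_smul, h, inv_smul_smul]
  rw [← hab]
  exact (hB a ha _ (hab ▸ hb)).symm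

variable [MeasurableSpace X] [MeasurableEq X] [Countable Δ] {μ : Measure X} [IsFiniteMeasure μ]

theorem IsPartialTransversal.ae_orbit_finite (hmp : ∀ δ : Δ, MeasurePreserving (δ • ·) μ μ)
    {B : Set X} (hBm : MeasurableSet B) (hB : IsPartialTransversal Δ B) :
    ∀ᵐ x ∂μ, x ∈ B → (MulAction.orbit Δ x).Finite := by
  obtain ⟨e, he⟩ := exists_surjective_nat Δ
  have hmeas : ∀ δ : Δ, Measurable (δ • · : X → X) := fun δ => (hmp δ).measurable
  set C : ℕ → Set X := fun n => {x | x ∈ B ∧ ∀ m < n, e m • x ≠ e n • x}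
  have hCm : ∀ n, MeasurableSet (C n) := fun n =>
    hBm.inter (measurableSet_setOfPred.2 (by fun_prop))
  set D : ℕ → Set X := fun n => (fun x => (e n)⁻¹ • x) ⁻¹' C n
  -- `D n = e n • C n`: a point of `D m ∩ D n` would be `e n • b` for a single `b ∈ B`,
  -- reached for the first time at both indices `m` and `n`.
  have hD : Pairwise (Disjoint on D) := by
    refine (pairwise_disjoint_on D).2 fun m n hmn => disjoint_left.2 fun x hxm hxn => ?_
    have hab : (e m)⁻¹ • x = (e n)⁻¹ • x :=
      hB.eq_of_smul_eq_smul hxm.1 hxn.1 (δ := e m) (δ' := e n) (by simp only [smul_inv_smul])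
    refine hxn.2 m hmn ?_
    calc e m • (e n)⁻¹ • x = e m • (e m)⁻¹ • x := by rw [hab]
      _ = e n • (e n)⁻¹ • x := by simp only [smul_inv_smul]
  have hsum : ∑' n, μ (C n) ≠ ∞ := by
    have hDC : ∀ n, μ (D n) = μ (C n) := fun n =>
      (hmp _).measure_preimage (hCm n).nullMeasurableSet
    rw [← tsum_congr hDC, ← measure_iUnion hD fun n => hmeas _ (hCm n)]
    exact measure_ne_top μ _
  filter_upwards [ae_eventually_notMem hsum] with x hx hxB
  by_contra hinf
  have hrange : (range fun n => e n • x).Infinite := by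
    rwa [show range (fun n => e n • x) = MulAction.orbit Δ x from he.range_comp (· • x)]
  obtain ⟨n, hnew, hn⟩ :=
    (Nat.frequently_atTop_iff_infinite.2 hrange.setOf_forall_lt_ne).and_eventually hx |>.exists
  exact hn ⟨hxB, hnew⟩

theorem ae_exists_smul_mem_ne (hmp : ∀ δ : Δ, MeasurePreserving (δ • ·) μ μ) {A : Set X}
    (hA : MeasurableSet A) :
    ∀ᵐ x ∂μ, x ∈ A → (MulAction.orbit Δ x).Infinite → ∃ δ : Δ, δ • x ∈ A ∧ δ • x ≠ x := by
  have hmeas : ∀ δ : Δ, Measurable (δ • · : X → X) := fun δ => (hmp δ).measurable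
  have hBm : MeasurableSet {x | x ∈ A ∧ ∀ δ : Δ, δ • x ∈ A → δ • x = x} :=
    hA.inter (measurableSet_setOfPred.2 (by fun_prop))
  have hB : IsPartialTransversal Δ {x | x ∈ A ∧ ∀ δ : Δ, δ • x ∈ A → δ • x = x} :=
    fun x hx δ hδ => hx.2 δ hδ.1
  filter_upwards [hB.ae_orbit_finite hmp hBm] with x hfin hxA hinf
  by_contra! h
  exact hinf (hfin ⟨hxA, h⟩)

end PartialTransversal

section Swap

variable {X Δ : Type*} [MeasurableSpace X] [Group Δ] [MulAction Δ X] [MeasurableConstSMul Δ X]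

theorem exists_measurePreserving_orbit_swap {μ : Measure X} {δ : Δ}
    (hδ : MeasurePreserving (δ • ·) μ μ) {U V : Set X} (hU : MeasurableSet U)
    (hV : MeasurableSet V) :
    ∃ θ : X ≃ᵐ X, MeasurePreserving θ μ μ ∧ (∀ y, θ y ∈ MulAction.orbit Δ y) ∧
      (∀ y ∉ U, θ y = y) ∧ ∀ y ∈ U ∩ V, δ • y ∈ U \ V → θ y = δ • y := by
  set S := U ∩ V ∩ (δ • ·) ⁻¹' (U \ V)
  have hS : MeasurableSet S := (hU.inter hV).inter (measurable_const_smul δ (hU.diff hV))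
  have hfS : Disjoint S (MeasurableEquiv.smul δ ⁻¹' S) :=
    disjoint_left.2 fun _ hy hy' => hy.2.2 hy'.1.2
  refine ⟨MeasurableEquiv.swapWithImage _ hS hfS,
    MeasurableEquiv.measurePreserving_swapWithImage hδ, fun y => ?_, fun y hy => ?_,
    fun y hy hδy => MeasurableEquiv.swapWithImage_apply_of_mem ⟨hy, hδy⟩⟩
  · rcases MeasurableEquiv.swapWithImage_apply_eq_or (hS := hS) (hfS := hfS) y with h | h | h <;>
      rw [h]
    exacts [⟨δ, rfl⟩, ⟨δ⁻¹, rfl⟩, MulAction.mem_orbit_self y]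
  · refine MeasurableEquiv.swapWithImage_apply_of_notMem (fun h => hy h.1.1) fun h => hy ?_
    simpa using h.2.1

end Swap

theorem dense_subgroup_totally_non_free_general
    {X : Type*} [MeasurableSpace X] [StandardBorelSpace X]
    (μ : Measure X) [IsProbabilityMeasure μ]
    {Δ : Type*} [Group Δ] [Countable Δ] [MulAction Δ X]
    (hmp : ∀ δ : Δ, MeasurePreserving (fun x : X => δ • x) μ μ)
    (haper : ∀ᵐ x ∂μ, (MulAction.orbit Δ x).Infinite)
    (G : Subgroup (Equiv.Perm X))
    (hdense : ∀ T : Equiv.Perm X, Measurable ⇑T → Measurable ⇑T.symm →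
      MeasurePreserving ⇑T μ μ → (∀ᵐ x ∂μ, T x ∈ MulAction.orbit Δ x) →
      ∀ ε : ℝ≥0∞, 0 < ε → ∃ g ∈ G, μ {x : X | T x ≠ g x} < ε) :
    ∃ X₀ : Set X, MeasurableSet X₀ ∧ μ X₀ᶜ = 0 ∧
      ∀ x ∈ X₀, ∀ x' ∈ X₀,
        {g : Equiv.Perm X | g ∈ G ∧ g x = x} = {g : Equiv.Perm X | g ∈ G ∧ g x' = x'} →
        x = x' := by
  have : MeasurableConstSMul Δ X := ⟨fun δ => (hmp δ).measurable⟩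
  obtain ⟨s, hs, hsep⟩ := exists_measurableSet_separating X
  choose θ hθmp hθorb hθfix hθmove using fun p : (ℕ × Bool) × (ℕ × Bool) × Δ =>
    exists_measurePreserving_orbit_swap (hmp p.2.2) (hs p.1) (hs p.2.1)
  choose u hu using fun p => exists_seq_ae_eventually_eq (fun g : G => ⇑(g : Equiv.Perm X))
    (θ p) fun ε hε => by
      obtain ⟨g, hg, hlt⟩ := hdense (θ p).toEquiv (θ p).measurable (θ p).symm.measurable
        (hθmp p) (.of_forall (hθorb p)) ε hε
      exact ⟨⟨g, hg⟩, hlt⟩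
  have hret : ∀ᵐ x ∂μ, ∀ i, x ∈ s i → ∃ δ : Δ, δ • x ∈ s i ∧ δ • x ≠ x := by
    refine ae_all_iff.2 fun i => ?_
    filter_upwards [ae_exists_smul_mem_ne hmp (hs i), haper] with x hx hinf hxi
      using hx hxi hinf
  obtain ⟨X₀, hX₀, hX₀m, hgood⟩ := (hret.and (ae_all_iff.2 hu)).exists_measurable_mem
  refine ⟨X₀, hX₀m, mem_ae_iff.1 hX₀, fun x hx x' hx' hstab => ?_⟩
  by_contra hne
  obtain ⟨i, hx'i, hxi⟩ := hsep x' x (Ne.symm hne)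
  obtain ⟨δ, hδi, hδx'⟩ := (hgood x' hx').1 i hx'i
  obtain ⟨j, hx'j, hδj⟩ := hsep x' (δ • x') hδx'.symm
  set p := (i, j, δ)
  obtain ⟨k, hkx, hkx'⟩ := ((hgood x hx).2 p).and ((hgood x' hx').2 p) |>.exists
  have hfix : (u p k : Equiv.Perm X) x = x := hkx.trans (hθfix p x hxi)
  have hmem : (u p k : Equiv.Perm X) ∈ {g : Equiv.Perm X | g ∈ G ∧ g x' = x'} :=
    hstab ▸ ⟨(u p k).2, hfix⟩
  have hmove : (u p k : Equiv.Perm X) x' = δ • x' :=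
    hkx'.trans (hθmove p x' ⟨hx'i, hx'j⟩ ⟨hδi, hδj⟩)
  exact hδx' (hmove.symm.trans hmem.2)

/-- If `Δ` has a measure-preserving action on a standard probability space
`(X, μ)` with a.e. infinite orbits, and `G` is a countable group of measure-preserving
measurable bijections of `X` lying a.e. in the `Δ`-orbits and dense in the full group of the
`Δ`-orbit equivalence relation, then the `G`-action is totally non free: the stabilizer map is
injective on a conull measurable set. -/
theorem dense_subgroup_totally_non_free
    {X : Type*} [MeasurableSpace X] [StandardBorelSpace X]
    (μ : Measure X) [IsProbabilityMeasure μ]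
    {Δ : Type*} [Group Δ] [Countable Δ] [MulAction Δ X]
    (hmp : ∀ δ : Δ, MeasurePreserving (fun x : X => δ • x) μ μ)
    (haper : ∀ᵐ x ∂μ, (MulAction.orbit Δ x).Infinite)
    (G : Subgroup (Equiv.Perm X)) [Countable G]
    (hGmp : ∀ g ∈ G, Measurable ⇑g ∧ Measurable ⇑g.symm ∧ MeasurePreserving ⇑g μ μ)
    (hGorb : ∀ g ∈ G, ∀ᵐ x ∂μ, g x ∈ MulAction.orbit Δ x)
    (hdense : ∀ T : Equiv.Perm X, Measurable ⇑T → Measurable ⇑T.symm →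
      MeasurePreserving ⇑T μ μ → (∀ᵐ x ∂μ, T x ∈ MulAction.orbit Δ x) →
      ∀ ε : ℝ≥0∞, 0 < ε → ∃ g ∈ G, μ {x : X | T x ≠ g x} < ε) :
    ∃ X₀ : Set X, MeasurableSet X₀ ∧ μ X₀ᶜ = 0 ∧
      ∀ x ∈ X₀, ∀ x' ∈ X₀,
        {g : Equiv.Perm X | g ∈ G ∧ g x = x} = {g : Equiv.Perm X | g ∈ G ∧ g x' = x'} →
        x = x' :=
  dense_subgroup_totally_non_free_general μ hmp haper G hdense
end

section
/- Let Δ be a countable group with a measure-preserving action on a standard probability space (X,μ). Let Γ be a countable group of measure-preserving measurable bijections of X such that every γ ∈ Γ satisfies γ(x) ∈ Δ·x for μ-a.e. x, and such that Γ is dense in the full group of the Δ-orbit equivalence relation: for every measure-preserving measurable bijection T of X with T(x) ∈ Δ·x for μ-a.e. x and every ε > 0 there exists γ ∈ Γ with μ({x : T(x) ≠ γ(x)}) < ε. Then Γ acts almost surely highly transitively on the Δ-orbits: for μ-a.e. x ∈ X, the orbit Δ·x is Γ-invariant and the Γ-action on Δ·x is highly transitive. -/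
/-!
Fix finitely many `ζ a ∈ Δ` and a permutation `σ` of their indices. Inside a non-null set of
points `x` at which the `ζ a • x` are distinct, a countable separating family of measurable sets
yields a non-null `C` whose translates `ζ a • C` are pairwise disjoint. The bijection sending
`ζ a • x` to `ζ (σ a) • x` for `x ∈ C` and fixing all other points lies in the full group, and an
element `g ∈ G` that differs from it on a set of measure `< μ C / card` must agree with it at
all the points `ζ a • x` for some `x ∈ C`. Since there are only countably many such data, for
a.e. `x` every permutation of every finite subset of `Δ • x` is realised by `G`, which is high
transitivity.
-/

open MeasureTheory Function Set MulAction
open scoped ENNReal Pointwise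

theorem Equiv.Perm.exists_apply_eq_of_injective {α β : Type*} [Finite β] {u v : α → β}
    (hu : Injective u) (hv : Injective v) : ∃ σ : Equiv.Perm β, ∀ a, σ (u a) = v a := by
  classical
  refine ⟨((Equiv.ofInjective u hu).symm.trans (Equiv.ofInjective v hv)).extendSubtype,
    fun a => ?_⟩
  rw [Equiv.extendSubtype_apply_of_mem _ _ (mem_range_self a)]
  simp

theorem Pairwise.disjoint_option_elim_compl_iUnion {α ι : Type*} {s : ι → Set α}
    (hs : Pairwise (Disjoint on s)) :
    Pairwise (Disjoint on fun o : Option ι => o.elim (⋃ i, s i)ᶜ s) := by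
  rintro (_ | a) (_ | b) hab
  · exact absurd rfl hab
  · exact disjoint_compl_left_iff_subset.2 (subset_iUnion s b)
  · exact disjoint_compl_right_iff_subset.2 (subset_iUnion s a)
  · exact hs fun h => hab (congrArg some h)

theorem iUnion_option_elim_compl_iUnion {α ι : Type*} (s : ι → Set α) :
    ⋃ o : Option ι, o.elim (⋃ i, s i)ᶜ s = univ := by
  rw [iUnion_option]
  exact compl_union_self _

theorem MeasureTheory.MeasurePreserving.of_eqOn_preimage {α β ι : Type*} [MeasurableSpace α]
    [MeasurableSpace β] [Countable ι] {μ : Measure α} {ν : Measure β} {T : α → β}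
    {g : ι → α → β} {P : ι → Set α} {Q : ι → Set β}
    (hg : ∀ i, MeasurePreserving (g i) μ ν)
    (hPQ : ∀ i, g i ⁻¹' Q i = P i) (hQm : ∀ i, MeasurableSet (Q i))
    (hQd : Pairwise (Disjoint on Q)) (hQ : ⋃ i, Q i = univ) (hPd : Pairwise (Disjoint on P))
    (hP : ⋃ i, P i = univ) (hT : ∀ i, EqOn T (g i) (P i)) : MeasurePreserving T μ ν := by
  have hPm : ∀ i, MeasurableSet (P i) := fun i => hPQ i ▸ (hg i).measurable (hQm i)
  have hTm : Measurable T := by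
    intro E hE
    have : T ⁻¹' E = ⋃ i, P i ∩ g i ⁻¹' E := by
      ext x
      obtain ⟨i, hi⟩ := mem_iUnion.1 (hP.symm ▸ mem_univ x : x ∈ ⋃ i, P i)
      simp only [mem_preimage, mem_iUnion, mem_inter_iff]
      exact ⟨fun hx => ⟨i, hi, hT i hi ▸ hx⟩, fun ⟨j, hj, hjE⟩ => (hT j hj).symm ▸ hjE⟩
    rw [this]
    exact MeasurableSet.iUnion fun i => (hPm i).inter ((hg i).measurable hE)
  refine ⟨hTm, ?_⟩
  calc Measure.map T μ
      = Measure.map T (μ.restrict (⋃ i, P i)) := by rw [hP, Measure.restrict_univ]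
    _ = Measure.sum fun i => Measure.map (g i) (μ.restrict (g i ⁻¹' Q i)) := by
      rw [Measure.restrict_iUnion hPd hPm, Measure.map_sum hTm.aemeasurable]
      refine congrArg Measure.sum (funext fun i => ?_)
      rw [hPQ]
      exact Measure.map_congr ((ae_restrict_iff' (hPm i)).2 (.of_forall (hT i)))
    _ = ν.restrict (⋃ i, Q i) := by
      rw [Measure.restrict_iUnion hQd hQm]
      exact congrArg Measure.sum (funext fun i => ((hg i).restrict_preimage (hQm i)).map_eq)
    _ = ν := by rw [hQ, Measure.restrict_univ]

section Separation

variable {X : Type*} [MeasurableSpace X] [MeasurableSpace.CountablySeparated X]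
  {μ : Measure X}

theorem exists_subset_forall_apply_notMem_of_ne {f : X → X} (hf : Measurable f) {D : Set X}
    (hD : MeasurableSet D) (hμD : μ D ≠ 0) (hfD : ∀ x ∈ D, f x ≠ x) :
    ∃ C ⊆ D, MeasurableSet C ∧ μ C ≠ 0 ∧ ∀ x ∈ C, f x ∉ C := by
  obtain ⟨F, hFm, hFinj⟩ :=
    MeasurableSpace.measurable_injection_nat_bool_of_countablySeparated X
  set B : ℕ × Bool → Set X := fun p => {x | F x p.1 = p.2}
  have hBm : ∀ p, MeasurableSet (B p) := fun p =>
    measurableSet_eq_fun ((measurable_pi_apply p.1).comp hFm) measurable_const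
  -- `C` is a non-null piece on which some coordinate of the injection `F` changes under `f`.
  have hcover : D ⊆ ⋃ p, (D ∩ B p) \ f ⁻¹' B p := by
    intro x hx
    obtain ⟨n, hn⟩ := Function.ne_iff.1 (hFinj.ne (hfD x hx))
    exact mem_iUnion.2 ⟨(n, F x n), ⟨hx, rfl⟩, hn⟩
  obtain ⟨p, hp⟩ := exists_measure_pos_of_not_measure_iUnion_null
    (fun h => hμD (measure_mono_null hcover h))
  exact ⟨_, fun x hx => hx.1.1, (hD.inter (hBm p)).diff (hf (hBm p)), hp.ne',
    fun x hx hfx => hx.2 hfx.1.2⟩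

theorem exists_subset_forall_apply_notMem {ι : Type*} [Finite ι] {f : ι → X → X}
    (hf : ∀ i, Measurable (f i)) {D : Set X} (hD : MeasurableSet D) (hμD : μ D ≠ 0)
    (hfD : ∀ i, ∀ x ∈ D, f i x ≠ x) :
    ∃ C ⊆ D, MeasurableSet C ∧ μ C ≠ 0 ∧ ∀ i, ∀ x ∈ C, f i x ∉ C := by
  classical
  have := Fintype.ofFinite ι
  suffices ∀ s : Finset ι, ∃ C ⊆ D, MeasurableSet C ∧ μ C ≠ 0 ∧ ∀ i ∈ s, ∀ x ∈ C, f i x ∉ C by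
    simpa using this Finset.univ
  intro s
  induction s using Finset.induction_on with
  | empty => exact ⟨D, subset_rfl, hD, hμD, by simp⟩
  | insert i s _ ih =>
    obtain ⟨C, hCD, hC, hμC, hCs⟩ := ih
    obtain ⟨C', hC'C, hC', hμC', hC'i⟩ :=
      exists_subset_forall_apply_notMem_of_ne (hf i) hC hμC fun x hx => hfD i x (hCD hx)
    refine ⟨C', hC'C.trans hCD, hC', hμC', fun j hj x hx hfx => ?_⟩
    rcases Finset.mem_insert.1 hj with rfl | hj
    · exact hC'i x hx hfx
    · exact hCs j hj x (hC'C hx) (hC'C hfx)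

end Separation

section Translates

variable {X Δ ι : Type*} [Group Δ] [MulAction Δ X]

theorem exists_subset_injective_smul [MeasurableSpace X] [MeasurableSpace.CountablySeparated X]
    [MeasurableConstSMul Δ X] {μ : Measure X} [Finite ι]
    {ζ : ι → Δ} {D : Set X} (hD : MeasurableSet D) (hμD : μ D ≠ 0)
    (hinj : ∀ x ∈ D, Injective (ζ · • x)) :
    ∃ C ⊆ D, MeasurableSet C ∧ μ C ≠ 0 ∧ Injective fun p : ι × C => ζ p.1 • (p.2 : X) := by
  obtain ⟨C, hCD, hC, hμC, hCsep⟩ := exists_subset_forall_apply_notMem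
    (f := fun p : {p : ι × ι // p.1 ≠ p.2} => (((ζ p.1.2)⁻¹ * ζ p.1.1) • · : X → X))
    (fun _ => measurable_const_smul _) hD hμD fun p x hx hpx =>
      p.2 (hinj x hx (by simpa [mul_smul, inv_smul_eq_iff] using hpx))
  refine ⟨C, hCD, hC, hμC, fun ⟨a, x⟩ ⟨b, y⟩ h => ?_⟩
  simp only at h
  obtain rfl | hab := eq_or_ne a b
  · rw [smul_left_cancel_iff] at h
    rw [Subtype.ext h]
  · exact (hCsep ⟨(a, b), hab⟩ x x.2 (by simp [mul_smul, h])).elim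

theorem pairwise_disjoint_smul_of_injective {ζ : ι → Δ} {C : Set X}
    (hC : Injective fun p : ι × C => ζ p.1 • (p.2 : X)) :
    Pairwise (Disjoint on fun a => ζ a • C) := by
  rintro a b hab
  refine disjoint_left.2 ?_
  rintro _ ⟨x, hx, rfl⟩ ⟨y, hy, hxy⟩
  exact hab (congrArg Prod.fst (@hC (b, ⟨y, hy⟩) (a, ⟨x, hx⟩) hxy)).symm

variable (ζ : ι → Δ) {C : Set X} (hC : Injective fun p : ι × C => ζ p.1 • (p.2 : X))

noncomputable def permuteTranslates (σ : Equiv.Perm ι) : Equiv.Perm X :=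
  Equiv.Perm.viaEmbedding (σ.prodCongr (Equiv.refl C)) ⟨_, hC⟩

theorem permuteTranslates_smul (σ : Equiv.Perm ι) (a : ι) {x : X} (hx : x ∈ C) :
    permuteTranslates ζ hC σ (ζ a • x) = ζ (σ a) • x :=
  Equiv.Perm.viaEmbedding_apply _ ⟨_, hC⟩ (a, ⟨x, hx⟩)

theorem permuteTranslates_of_notMem (σ : Equiv.Perm ι) {z : X} (hz : z ∉ ⋃ a, ζ a • C) :
    permuteTranslates ζ hC σ z = z := by
  refine Equiv.Perm.viaEmbedding_apply_of_notMem _ ⟨_, hC⟩ z ?_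
  rintro ⟨⟨a, x, hx⟩, rfl⟩
  exact hz (mem_iUnion.2 ⟨a, smul_mem_smul_set hx⟩)

theorem permuteTranslates_inv (σ : Equiv.Perm ι) :
    permuteTranslates ζ hC σ⁻¹ = (permuteTranslates ζ hC σ)⁻¹ := by
  rw [permuteTranslates, permuteTranslates, ← Equiv.Perm.viaEmbeddingHom_apply,
    ← Equiv.Perm.viaEmbeddingHom_apply, ← map_inv]
  rfl

theorem permuteTranslates_mem_orbit (σ : Equiv.Perm ι) (z : X) :
    permuteTranslates ζ hC σ z ∈ orbit Δ z := by
  by_cases hz : z ∈ ⋃ a, ζ a • C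
  · obtain ⟨a, x, hx, rfl⟩ := mem_iUnion.1 hz
    rw [permuteTranslates_smul ζ hC σ a hx, orbit_smul]
    exact mem_orbit x _
  · rw [permuteTranslates_of_notMem ζ hC σ hz]
    exact mem_orbit_self z

theorem measurePreserving_permuteTranslates [Countable ι] [MeasurableSpace X] {μ : Measure X}
    [MeasurableConstSMul Δ X] [SMulInvariantMeasure Δ X μ] (hCm : MeasurableSet C)
    (σ : Equiv.Perm ι) :
    MeasurePreserving (permuteTranslates ζ hC σ) μ μ := by
  set S : Option ι → Set X := fun o => o.elim (⋃ a, ζ a • C)ᶜ (ζ · • C)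
  have hSd : Pairwise (Disjoint on S) :=
    (pairwise_disjoint_smul_of_injective hC).disjoint_option_elim_compl_iUnion
  have hSm : ∀ o, MeasurableSet (S o)
    | none => (MeasurableSet.iUnion fun a => hCm.const_smul (ζ a)).compl
    | some a => hCm.const_smul (ζ a)
  refine MeasurePreserving.of_eqOn_preimage (Q := fun o => S (σ.optionCongr o)) (P := S)
    (g := fun o => o.elim id fun a => ((ζ (σ a) * (ζ a)⁻¹) • ·))
    (fun o => ?_) (fun o => ?_) (fun o => hSm _) (hSd.comp_of_injective (Equiv.injective _))
    ((Equiv.surjective _).iUnion_comp S |>.trans (iUnion_option_elim_compl_iUnion _))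
    hSd (iUnion_option_elim_compl_iUnion _) fun o => ?_
  · cases o with
    | none => exact MeasurePreserving.id μ
    | some a => exact measurePreserving_smul _ μ
  · cases o with
    | none => rfl
    | some a => simp [S, preimage_smul, smul_smul, mul_assoc]
  · cases o with
    | none => exact fun z hz => permuteTranslates_of_notMem ζ hC σ hz
    | some a =>
      rintro _ ⟨x, hx, rfl⟩
      simp [permuteTranslates_smul ζ hC σ a hx, smul_smul]

end Translates

section FullGroup

variable {X Δ : Type*} [Group Δ] [MulAction Δ X] [MeasurableSpace X] {μ : Measure X}
  [MeasurableConstSMul Δ X] [SMulInvariantMeasure Δ X μ] {G : Subgroup (Equiv.Perm X)}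
  {ι : Type*} [Fintype ι]

theorem exists_mem_forall_apply_smul_eq [MeasurableSpace.CountablySeparated X] [MeasurableEq X]
    (hGm : ∀ g ∈ G, Measurable g)
    (hdense : ∀ T : Equiv.Perm X, Measurable ⇑T → Measurable ⇑T.symm →
      MeasurePreserving ⇑T μ μ → (∀ᵐ x ∂μ, T x ∈ orbit Δ x) →
      ∀ ε : ℝ≥0∞, 0 < ε → ∃ g ∈ G, μ {x : X | T x ≠ g x} < ε)
    (ζ : ι → Δ) (σ : Equiv.Perm ι) {D : Set X} (hD : MeasurableSet D) (hμD : μ D ≠ 0)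
    (hinj : ∀ x ∈ D, Injective (ζ · • x)) :
    ∃ x ∈ D, ∃ g ∈ G, ∀ a, g (ζ a • x) = ζ (σ a) • x := by
  obtain ⟨C, hCD, hC, hμC, hCinj⟩ := exists_subset_injective_smul hD hμD hinj
  set T := permuteTranslates ζ hCinj σ
  have hT : MeasurePreserving T μ μ := measurePreserving_permuteTranslates ζ hCinj hC σ
  have hTsymm : Measurable T.symm := by
    simpa [T, permuteTranslates_inv] using
      (measurePreserving_permuteTranslates (μ := μ) ζ hCinj hC σ⁻¹).measurable
  obtain ⟨g, hg, hgT⟩ := hdense T hT.measurable hTsymm hT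
    (.of_forall (permuteTranslates_mem_orbit ζ hCinj σ)) (μ C / Fintype.card ι)
    (ENNReal.div_pos hμC (ENNReal.natCast_ne_top _))
  set E := {z | T z ≠ g z}
  have hE : MeasurableSet E := (measurableSet_eq_fun hT.measurable (hGm g hg)).compl
  have hμE : μ (⋃ a, (ζ a • ·) ⁻¹' E) < μ C := calc
    μ (⋃ a, (ζ a • ·) ⁻¹' E) ≤ ∑ a, μ ((ζ a • ·) ⁻¹' E) := measure_iUnion_fintype_le _ _
    _ = Fintype.card ι * μ E := by
      simp [(measurePreserving_smul _ μ).measure_preimage hE.nullMeasurableSet]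
    _ < μ C := ENNReal.mul_lt_of_lt_div' hgT
  obtain ⟨x, hxC, hxE⟩ := not_subset.1 fun h => (measure_mono h).not_gt hμE
  refine ⟨x, hCD hxC, g, hg, fun a => ?_⟩
  rw [← permuteTranslates_smul ζ hCinj σ a hxC]
  exact (not_not.1 fun h => hxE (mem_iUnion.2 ⟨a, h⟩)).symm

theorem ae_exists_apply_smul_eq [MeasurableSpace.CountablySeparated X] [MeasurableEq X]
    [Countable G] (hGm : ∀ g ∈ G, Measurable g)
    (hdense : ∀ T : Equiv.Perm X, Measurable ⇑T → Measurable ⇑T.symm →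
      MeasurePreserving ⇑T μ μ → (∀ᵐ x ∂μ, T x ∈ orbit Δ x) →
      ∀ ε : ℝ≥0∞, 0 < ε → ∃ g ∈ G, μ {x : X | T x ≠ g x} < ε)
    (ζ : ι → Δ) (σ : Equiv.Perm ι) :
    ∀ᵐ x ∂μ, Injective (ζ · • x) → ∃ g ∈ G, ∀ a, g (ζ a • x) = ζ (σ a) • x := by
  have hGm' : ∀ g : G, Measurable (g : Equiv.Perm X) := fun g => hGm g g.2
  have hsol :
      Measurable fun x : X => ∃ g : G, ∀ a, (g : Equiv.Perm X) (ζ a • x) = ζ (σ a) • x := by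
    fun_prop
  simp only [Subtype.exists, exists_prop] at hsol
  have hinj : Measurable fun x : X => Injective (ζ · • x) := by
    unfold Injective
    fun_prop
  refine ae_iff.2 (by_contra fun hμ => ?_)
  obtain ⟨x, hx, hsolx⟩ := exists_mem_forall_apply_smul_eq hGm hdense ζ σ
    (hinj.imp hsol).not.setOf hμ fun x hx => (Classical.not_imp.1 hx).1
  exact hx fun _ => hsolx

theorem ae_forall_mem_orbit_apply_mem_orbit [Countable Δ] [Countable G]
    (hGorb : ∀ g ∈ G, ∀ᵐ x ∂μ, g x ∈ orbit Δ x) :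
    ∀ᵐ x ∂μ, ∀ g ∈ G, ∀ y ∈ orbit Δ x, g y ∈ orbit Δ x := by
  have : ∀ᵐ x ∂μ, ∀ (g : G) (δ : Δ), (g : Equiv.Perm X) (δ • x) ∈ orbit Δ x := by
    refine ae_all_iff.2 fun g => ae_all_iff.2 fun δ => ?_
    filter_upwards [(measurePreserving_smul δ μ).quasiMeasurePreserving.ae (hGorb g g.2)]
      with x hx
    rwa [orbit_smul] at hx
  filter_upwards [this] with x hx g hg y hy
  obtain ⟨δ, rfl⟩ := hy
  exact hx ⟨g, hg⟩ δ

end FullGroup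

theorem exists_apply_eq_of_forall_perm_smul {X Δ : Type*} [Group Δ] [MulAction Δ X]
    {G : Subgroup (Equiv.Perm X)} {x : X}
    (hG : ∀ (m : ℕ) (ζ : Fin m → Δ) (σ : Equiv.Perm (Fin m)),
      Injective (ζ · • x) → ∃ g ∈ G, ∀ a, g (ζ a • x) = ζ (σ a) • x)
    {n : ℕ} {y y' : Fin n → X} (hy : ∀ i, y i ∈ orbit Δ x) (hy' : ∀ i, y' i ∈ orbit Δ x)
    (hinj : Injective y) (hinj' : Injective y') : ∃ g ∈ G, ∀ i, g (y i) = y' i := by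
  set S := range y ∪ range y'
  have : Finite S := ((finite_range y).union (finite_range y')).to_subtype
  obtain ⟨m, ⟨e⟩⟩ : ∃ m, Nonempty (Fin m ≃ S) := ⟨_, ⟨(Finite.equivFin S).symm⟩⟩
  have hS : ∀ z ∈ S, z ∈ orbit Δ x := by
    rintro _ (⟨i, rfl⟩ | ⟨i, rfl⟩)
    exacts [hy i, hy' i]
  choose ζ hζ using fun j => hS _ (e j).2
  have hζinj : Injective (ζ · • x) := fun j k h =>
    e.injective (Subtype.ext (by simpa only [hζ] using h))
  obtain ⟨σ, hσ⟩ := Equiv.Perm.exists_apply_eq_of_injective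
    (u := fun i => e.symm ⟨y i, .inl ⟨i, rfl⟩⟩) (v := fun i => e.symm ⟨y' i, .inr ⟨i, rfl⟩⟩)
    (fun i j h => hinj (congrArg Subtype.val (e.symm.injective h)))
    (fun i j h => hinj' (congrArg Subtype.val (e.symm.injective h)))
  obtain ⟨g, hg, hgσ⟩ := hG _ ζ σ hζinj
  refine ⟨g, hg, fun i => ?_⟩
  simpa [hζ, hσ] using hgσ (e.symm ⟨y i, .inl ⟨i, rfl⟩⟩)

theorem dense_subgroup_highly_transitive_on_orbits_general
    {X : Type*} [MeasurableSpace X] [StandardBorelSpace X]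
    (μ : Measure X)
    {Δ : Type*} [Group Δ] [Countable Δ] [MulAction Δ X]
    (hmp : ∀ δ : Δ, MeasurePreserving (fun x : X => δ • x) μ μ)
    (G : Subgroup (Equiv.Perm X)) [Countable G]
    (hGmp : ∀ g ∈ G, Measurable ⇑g ∧ Measurable ⇑g.symm ∧ MeasurePreserving ⇑g μ μ)
    (hGorb : ∀ g ∈ G, ∀ᵐ x ∂μ, g x ∈ MulAction.orbit Δ x)
    (hdense : ∀ T : Equiv.Perm X, Measurable ⇑T → Measurable ⇑T.symm →
      MeasurePreserving ⇑T μ μ → (∀ᵐ x ∂μ, T x ∈ MulAction.orbit Δ x) →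
      ∀ ε : ℝ≥0∞, 0 < ε → ∃ g ∈ G, μ {x : X | T x ≠ g x} < ε) :
    ∀ᵐ x ∂μ,
      (∀ g ∈ G, ∀ y ∈ MulAction.orbit Δ x, g y ∈ MulAction.orbit Δ x) ∧
      (∀ (n : ℕ) (y y' : Fin n → X),
        (∀ i, y i ∈ MulAction.orbit Δ x) → (∀ i, y' i ∈ MulAction.orbit Δ x) →
        Function.Injective y → Function.Injective y' →
        ∃ g ∈ G, ∀ i, g (y i) = y' i) := by
  have : MeasurableConstSMul Δ X := ⟨fun δ => (hmp δ).measurable⟩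
  have : SMulInvariantMeasure Δ X μ :=
    ⟨fun δ _ hs => (hmp δ).measure_preimage hs.nullMeasurableSet⟩
  have hperm : ∀ᵐ x ∂μ, ∀ (m : ℕ) (ζ : Fin m → Δ) (σ : Equiv.Perm (Fin m)),
      Injective (ζ · • x) → ∃ g ∈ G, ∀ a, g (ζ a • x) = ζ (σ a) • x := by
    simp only [ae_all_iff]
    exact fun m ζ σ => ae_exists_apply_smul_eq (fun g hg => (hGmp g hg).1) hdense ζ σ
  filter_upwards [ae_forall_mem_orbit_apply_mem_orbit hGorb, hperm] with x hGx hpermx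
  exact ⟨hGx, fun n y y' => exists_apply_eq_of_forall_perm_smul hpermx⟩

/-- If `Δ` has a measure-preserving action on a standard probability space
`(X, μ)` and `G` is a countable group of measure-preserving measurable bijections of `X` lying
a.e. in the `Δ`-orbits and dense in the full group of the `Δ`-orbit equivalence relation, then
for a.e. `x` the orbit `Δ • x` is `G`-invariant and the `G`-action on it is highly
transitive. -/
theorem dense_subgroup_highly_transitive_on_orbits
    {X : Type*} [MeasurableSpace X] [StandardBorelSpace X]
    (μ : Measure X) [IsProbabilityMeasure μ]
    {Δ : Type*} [Group Δ] [Countable Δ] [MulAction Δ X]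
    (hmp : ∀ δ : Δ, MeasurePreserving (fun x : X => δ • x) μ μ)
    (G : Subgroup (Equiv.Perm X)) [Countable G]
    (hGmp : ∀ g ∈ G, Measurable ⇑g ∧ Measurable ⇑g.symm ∧ MeasurePreserving ⇑g μ μ)
    (hGorb : ∀ g ∈ G, ∀ᵐ x ∂μ, g x ∈ MulAction.orbit Δ x)
    (hdense : ∀ T : Equiv.Perm X, Measurable ⇑T → Measurable ⇑T.symm →
      MeasurePreserving ⇑T μ μ → (∀ᵐ x ∂μ, T x ∈ MulAction.orbit Δ x) →
      ∀ ε : ℝ≥0∞, 0 < ε → ∃ g ∈ G, μ {x : X | T x ≠ g x} < ε) :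
    ∀ᵐ x ∂μ,
      (∀ g ∈ G, ∀ y ∈ MulAction.orbit Δ x, g y ∈ MulAction.orbit Δ x) ∧
      (∀ (n : ℕ) (y y' : Fin n → X),
        (∀ i, y i ∈ MulAction.orbit Δ x) → (∀ i, y' i ∈ MulAction.orbit Δ x) →
        Function.Injective y → Function.Injective y' →
        ∃ g ∈ G, ∀ i, g (y i) = y' i) :=
  dense_subgroup_highly_transitive_on_orbits_general μ hmp G hGmp hGorb hdense
end

section
/- Let Γ be a countable group with a measure-preserving action on a standard probability space (X,μ). Assume that for every finite subset F ⊆ Γ∖{1}, the set {x ∈ X : f·x ≠ x for all f ∈ F} has positive measure. Then for every finite subset F ⊆ Γ there exists a measurable set A ⊆ X with μ(A) > 0 such that the sets f·A (f ∈ F) are pairwise disjoint. -/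
/-!
Fix a countable family `S` of measurable sets separating points, closed under complements. If
`g • x ≠ x`, some `s ∈ S` contains `x` but not `g • x`, so `x ∈ s \ g⁻¹ • s`, and any set `A`
inside `s \ g⁻¹ • s` is disjoint from `g • A`. For a finite `G ⊆ Γ`, the intersections
`⋂ g ∈ G, s_g \ g⁻¹ • s_g` over all choices `(s_g) ∈ S^G` are countably many measurable sets
covering the points moved by every element of `G`, so one of them has positive measure. Applying
this to `G = F⁻¹F \ {1}` gives the theorem, since `f • A` and `f' • A` are disjoint as soon as
`A` and `(f⁻¹ f') • A` are.
-/

open MeasureTheory MeasurableSpace Pointwise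

theorem MeasurableSpace.exists_countable_measurableSet_mem_notMem (X : Type*) [MeasurableSpace X]
    [CountablySeparated X] :
    ∃ S : Set (Set X), S.Countable ∧ (∀ s ∈ S, MeasurableSet s) ∧
      ∀ x y, x ≠ y → ∃ s ∈ S, x ∈ s ∧ y ∉ s := by
  obtain ⟨S, hSc, hSm, hsep⟩ :=
    HasCountableSeparatingOn.exists_countable_separating (α := X) (p := MeasurableSet)
      (t := Set.univ)
  refine ⟨S ∪ compl '' S, hSc.union (hSc.image _), ?_, fun x y hxy => ?_⟩
  · rintro s (hs | ⟨s, hs, rfl⟩)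
    exacts [hSm s hs, (hSm s hs).compl]
  · obtain ⟨s, hs, hxs⟩ : ∃ s ∈ S, ¬(x ∈ s ↔ y ∈ s) := by
      by_contra! h
      exact hxy (hsep x trivial y trivial h)
    by_cases hx : x ∈ s
    · exact ⟨s, .inl hs, hx, fun hy => hxs (iff_of_true hx hy)⟩
    · exact ⟨sᶜ, .inr ⟨s, hs, rfl⟩, hx, fun hy => hxs (iff_of_false hx hy)⟩

section

variable {Γ X : Type*} [Group Γ] [MulAction Γ X]

theorem Set.disjoint_smul_set_smul_set_iff (f f' : Γ) (A : Set X) :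
    Disjoint (f • A) (f' • A) ↔ Disjoint A ((f⁻¹ * f') • A) := by
  rw [Set.disjoint_smul_set_left, smul_smul]

theorem Set.disjoint_smul_set_of_subset_diff {A s : Set X} {g : Γ} (hA : A ⊆ s \ g⁻¹ • s) :
    Disjoint A (g • A) := by
  rw [Set.disjoint_left]
  rintro _ ha ⟨a', ha', rfl⟩
  exact (hA ha').2 (Set.mem_inv_smul_set_iff.2 (hA ha).1)

theorem setOf_forall_smul_ne_subset_iUnion {S : Set (Set X)}
    (hS : ∀ x y, x ≠ y → ∃ s ∈ S, x ∈ s ∧ y ∉ s) (G : Finset Γ) :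
    {x : X | ∀ g ∈ G, g • x ≠ x} ⊆
      ⋃ σ : G → S, ⋂ g : G, (σ g : Set X) \ (g : Γ)⁻¹ • (σ g : Set X) := by
  intro x hx
  have hchoice : ∀ g : G, ∃ s : S, x ∈ (s : Set X) \ (g : Γ)⁻¹ • (s : Set X) := by
    rintro ⟨g, hg⟩
    obtain ⟨s, hs, hxs, hgxs⟩ := hS x (g • x) (hx g hg).symm
    exact ⟨⟨s, hs⟩, hxs, fun h => hgxs (Set.mem_inv_smul_set_iff.1 h)⟩
  choose σ hσ using hchoice
  exact Set.mem_iUnion.2 ⟨σ, Set.mem_iInter.2 hσ⟩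

theorem exists_measurableSet_pos_disjoint_smul [MeasurableSpace X] [CountablySeparated X]
    [MeasurableConstSMul Γ X] (μ : Measure X) (G : Finset Γ)
    (hG : 0 < μ {x | ∀ g ∈ G, g • x ≠ x}) :
    ∃ A : Set X, MeasurableSet A ∧ 0 < μ A ∧ ∀ g ∈ G, Disjoint A (g • A) := by
  obtain ⟨S, hSc, hSm, hS⟩ := exists_countable_measurableSet_mem_notMem X
  have : Countable S := hSc.to_subtype
  obtain ⟨σ, hσ⟩ := exists_measure_pos_of_not_measure_iUnion_null
    (hG.trans_le (measure_mono (setOf_forall_smul_ne_subset_iUnion hS G))).ne'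
  refine ⟨_, .iInter fun g => ?_, hσ, fun g hg =>
    Set.disjoint_smul_set_of_subset_diff (Set.iInter_subset _ (⟨g, hg⟩ : G))⟩
  have hs := hSm _ (σ g).2
  exact hs.diff (hs.const_smul _)

end

theorem exists_posMeasure_set_with_disjoint_translates_general
    {X : Type*} [MeasurableSpace X] [StandardBorelSpace X]
    (μ : Measure X)
    {Γ : Type*} [Group Γ] [MulAction Γ X]
    (hmp : ∀ γ : Γ, MeasurePreserving (fun x : X => γ • x) μ μ)
    (hfaith : ∀ F : Finset Γ, (1 : Γ) ∉ F → 0 < μ {x : X | ∀ f ∈ F, f • x ≠ x}) :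
    ∀ F : Finset Γ, ∃ A : Set X, MeasurableSet A ∧ 0 < μ A ∧
      ∀ f ∈ F, ∀ f' ∈ F, f ≠ f' → Disjoint (f • A) (f' • A) := by
  intro F
  classical
  have : MeasurableConstSMul Γ X := ⟨fun γ => (hmp γ).measurable⟩
  obtain ⟨A, hAm, hApos, hAdisj⟩ := exists_measurableSet_pos_disjoint_smul μ ((F⁻¹ * F).erase 1)
    (hfaith _ (Finset.notMem_erase 1 _))
  refine ⟨A, hAm, hApos, fun f hf f' hf' hne => ?_⟩
  rw [Set.disjoint_smul_set_smul_set_iff]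
  exact hAdisj _ (Finset.mem_erase.2
    ⟨fun h => hne (inv_mul_eq_one.1 h), Finset.mul_mem_mul (Finset.inv_mem_inv hf) hf'⟩)

/-- For a measure-preserving action of a countable group `Γ` on a standard
probability space `(X, μ)`, if for every finite `F ⊆ Γ \ {1}` the set of points moved by all
elements of `F` has positive measure, then for every finite `F ⊆ Γ` there is a positive-measure
measurable set `A` whose translates `f • A`, `f ∈ F`, are pairwise disjoint. -/
theorem exists_posMeasure_set_with_disjoint_translates
    {X : Type*} [MeasurableSpace X] [StandardBorelSpace X]
    (μ : Measure X) [IsProbabilityMeasure μ]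
    {Γ : Type*} [Group Γ] [Countable Γ] [MulAction Γ X]
    (hmp : ∀ γ : Γ, MeasurePreserving (fun x : X => γ • x) μ μ)
    (hfaith : ∀ F : Finset Γ, (1 : Γ) ∉ F → 0 < μ {x : X | ∀ f ∈ F, f • x ≠ x}) :
    ∀ F : Finset Γ, ∃ A : Set X, MeasurableSet A ∧ 0 < μ A ∧
      ∀ f ∈ F, ∀ f' ∈ F, f ≠ f' → Disjoint (f • A) (f' • A) :=
  exists_posMeasure_set_with_disjoint_translates_general μ hmp hfaith
end

section
/- Let X = {0,1}^ℕ equipped with the product measure μ = ⊗_{n∈ℕ}(½δ_0 + ½δ_1). Let T be a measure-preserving measurable bijection of X such that for μ-a.e. x, T(x) agrees with x in all but finitely many coordinates. Then for every ε > 0 there exist n ∈ ℕ and a permutation σ of {0,1}^n such that μ({x ∈ X : T(x) ≠ σ̃(x)}) < ε, where σ̃ is the dyadic permutation of X induced by σ. -/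
/-!
Off a set of small measure, `T` is the identity beyond some coordinate `N`, and the first `N`
coordinates of `T x` are a function of the first `M` coordinates of `x` (measurable sets are
approximated by cylinders). Hence `T` agrees, off a set `E` of small measure, with the map
replacing each prefix `u` of length `M` by `F u`, where `F` need not be a bijection. Call `u` good
when `E` fills less than half of the cylinder of `u`. Measure preservation makes `F` injective on
good words: two good cylinders with the same image would put more than the mass of one cylinder
into the preimage of a single cylinder. Extending `F` from the good words to a permutation costs
at most the bad cylinders, whose total measure is at most `2 μ E`.
-/

open MeasureTheory
open scoped ENNReal

/-- The map on `{0,1}^ℕ` induced by a permutation `σ` of the set of binary words of length `n`: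
it permutes the first `n` coordinates according to `σ` and leaves the others unchanged. -/
def dyadicMap (n : ℕ) (σ : Equiv.Perm (Fin n → Bool)) (x : ℕ → Bool) : ℕ → Bool :=
  fun i => if h : i < n then σ (fun j : Fin n => x (j : ℕ)) ⟨i, h⟩ else x i

open Filter Set Topology
open scoped symmDiff

theorem Set.InjOn.exists_perm_eqOn {γ : Type*} [Finite γ] {f : γ → γ} {s : Set γ}
    (hf : InjOn f s) : ∃ σ : Equiv.Perm γ, EqOn σ f s := by
  classical
  exact ⟨(hf.bijOn_image.equiv f).extendSubtype, fun x hx =>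
    Equiv.extendSubtype_apply_of_mem (hf.bijOn_image.equiv f) x hx⟩

theorem MeasureTheory.sum_measure_preimage_singleton_inter {Ω β : Type*} [MeasurableSpace Ω]
    [Fintype β] (μ : Measure Ω) {f : Ω → β} (hf : ∀ b, MeasurableSet (f ⁻¹' {b}))
    (E : Set Ω) : ∑ b, μ (f ⁻¹' {b} ∩ E) = μ E := by
  simp_rw [← Measure.restrict_apply (hf _)]
  rw [sum_measure_preimage_singleton _ fun b _ => hf b, Finset.coe_univ, preimage_univ,
    Measure.restrict_apply_univ]

namespace Dyadic

variable {α : Type*}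

def word (n : ℕ) (x : ℕ → α) : Fin n → α := fun j => x j

def replacePrefix (n : ℕ) (F : (Fin n → α) → Fin n → α) (x : ℕ → α) : ℕ → α :=
  fun i => if h : i < n then F (word n x) ⟨i, h⟩ else x i

theorem word_replacePrefix (n : ℕ) (F : (Fin n → α) → Fin n → α) (x : ℕ → α) :
    word n (replacePrefix n F x) = F (word n x) := by
  funext j
  simp [word, replacePrefix]

theorem replacePrefix_congr {n : ℕ} {F G : (Fin n → α) → Fin n → α} {x : ℕ → α}
    (h : F (word n x) = G (word n x)) : replacePrefix n F x = replacePrefix n G x := by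
  unfold replacePrefix
  rw [h]

theorem eq_replacePrefix_of_forall_ge_eq {N M : ℕ} (hNM : N ≤ M) (g : (Fin M → α) → Fin N → α)
    {x y : ℕ → α} (htail : ∀ i ≥ N, y i = x i) (hhead : word N y = g (word M x)) :
    y = replacePrefix M (fun u i => if h : (i : ℕ) < N then g u ⟨i, h⟩ else u i) x := by
  funext i
  simp only [replacePrefix, word]
  split_ifs with hM hN
  · exact congrFun hhead ⟨i, hN⟩
  · exact htail i (not_lt.1 hN)
  · exact htail i (hNM.trans (not_lt.1 hM))

theorem preimage_word_singleton (n : ℕ) (u : Fin n → α) :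
    word n ⁻¹' {u} = {x | ∀ i : Fin n, x i = u i} := by
  ext x
  simp [word, funext_iff]

section Measure

variable [MeasurableSpace α]

theorem measurable_word (n : ℕ) : Measurable (word n : (ℕ → α) → Fin n → α) :=
  measurable_pi_lambda _ fun _ => measurable_pi_apply _

theorem eventually_preimage_image_word_eq {t : Set (ℕ → α)}
    (ht : t ∈ measurableCylinders fun _ : ℕ => α) :
    ∀ᶠ M in atTop, word M ⁻¹' (word M '' t) = t := by
  obtain ⟨s, S, -, rfl⟩ := (mem_measurableCylinders t).1 ht
  filter_upwards [eventually_ge_atTop (s.sup (· + 1))] with M hM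
  refine (subset_preimage_image _ _).antisymm' ?_
  rintro y ⟨x, hx, hxy⟩
  have : s.restrict y = s.restrict x := funext fun i =>
    (congrFun hxy ⟨i, (Finset.le_sup (f := (· + 1)) i.2).trans hM⟩).symm
  rwa [mem_cylinder, this]

theorem eventually_exists_measure_preimage_word_symmDiff_lt (μ : Measure (ℕ → α))
    [IsFiniteMeasure μ] {s : Set (ℕ → α)} (hs : MeasurableSet s) {δ : ℝ≥0∞} (hδ : 0 < δ) :
    ∀ᶠ M in atTop, ∃ V : Set (Fin M → α), μ ((word M ⁻¹' V) ∆ s) < δ := by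
  obtain ⟨t, ht, htδ⟩ := exists_measure_symmDiff_lt_of_generateFrom_isSetRing (μ := μ)
    isSetRing_measurableCylinders
    ⟨{univ}, countable_singleton _,
      by simpa using univ_mem_measurableCylinders (fun _ : ℕ => α), by simp⟩
    generateFrom_measurableCylinders.symm hs hδ
  filter_upwards [eventually_preimage_image_word_eq ht] with M hM
  exact ⟨word M '' t, by rwa [hM]⟩

theorem eventually_exists_measure_ne_comp_word_lt {β : Type*} [Fintype β] [Nonempty β]
    [MeasurableSpace β] [MeasurableSingletonClass β] (μ : Measure (ℕ → α)) [IsFiniteMeasure μ]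
    {f : (ℕ → α) → β} (hf : Measurable f) {δ : ℝ≥0∞} (hδ : 0 < δ) :
    ∀ᶠ M in atTop, ∃ g : (Fin M → α) → β, μ {x | f x ≠ g (word M x)} < δ := by
  have hδ' : 0 < δ / Fintype.card β := ENNReal.div_pos hδ.ne' (ENNReal.natCast_ne_top _)
  filter_upwards [eventually_all.2 fun b =>
    eventually_exists_measure_preimage_word_symmDiff_lt μ (hf (measurableSet_singleton b)) hδ']
    with M hM
  choose V hV using hM
  set g : (Fin M → α) → β := fun u => Classical.epsilon fun b => u ∈ V b
  have hsub : {x | f x ≠ g (word M x)} ⊆ ⋃ b, (word M ⁻¹' V b) ∆ (f ⁻¹' {b}) := by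
    intro x hx
    by_cases hxf : word M x ∈ V (f x)
    · have hxg : word M x ∈ V (g (word M x)) :=
        Classical.epsilon_spec (p := fun b => word M x ∈ V b) ⟨_, hxf⟩
      exact mem_iUnion.2 ⟨_, Or.inl ⟨hxg, hx⟩⟩
    · exact mem_iUnion.2 ⟨f x, Or.inr ⟨rfl, hxf⟩⟩
  refine ⟨g, ?_⟩
  calc μ {x | f x ≠ g (word M x)}
      ≤ ∑ b, μ ((word M ⁻¹' V b) ∆ (f ⁻¹' {b})) :=
        (measure_mono hsub).trans (measure_iUnion_fintype_le μ _)
    _ < ∑ _b : β, δ / Fintype.card β :=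
        ENNReal.sum_lt_sum_of_nonempty Finset.univ_nonempty fun b _ => hV b
    _ ≤ δ := by simpa using ENNReal.mul_div_le

theorem tendsto_measure_exists_ge_ne {Ω β : Type*} [MeasurableSpace Ω] [MeasurableSpace β]
    [MeasurableEq β] {μ : Measure Ω} [IsFiniteMeasure μ] {f g : Ω → ℕ → β}
    (hf : Measurable f) (hg : Measurable g) (h : ∀ᵐ x ∂μ, ∃ N, ∀ i ≥ N, f x i = g x i) :
    Tendsto (fun N => μ {x | ∃ i ≥ N, f x i ≠ g x i}) atTop (𝓝 0) := by
  have hmeas : ∀ N, MeasurableSet {x | ∃ i ≥ N, f x i ≠ g x i} := fun N =>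
    measurableSet_setOfPred.2 <| Measurable.exists fun i => by fun_prop
  have hnull : μ (⋂ N, {x | ∃ i ≥ N, f x i ≠ g x i}) = 0 :=
    measure_mono_null (by
      rintro x hx ⟨N, hN⟩
      obtain ⟨i, hi, hne⟩ := mem_iInter.1 hx N
      exact hne (hN i hi)) (ae_iff.1 h)
  simpa [hnull, Function.comp_def] using
    tendsto_measure_iInter_atTop (μ := μ) (fun N => (hmeas N).nullMeasurableSet)
    (fun N N' hNN' x ⟨i, hi, hne⟩ => ⟨i, hNN'.trans hi, hne⟩) ⟨0, measure_ne_top μ _⟩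

section Cylinders

variable [MeasurableSingletonClass α] {μ : Measure (ℕ → α)} [IsFiniteMeasure μ] {M : ℕ}
  {T : (ℕ → α) → ℕ → α} {F : (Fin M → α) → Fin M → α} {E : Set (ℕ → α)}

theorem measurableSet_preimage_word_singleton (u : Fin M → α) :
    MeasurableSet (word M ⁻¹' {u}) :=
  measurable_word M (measurableSet_singleton u)

theorem injOn_of_two_mul_measure_inter_lt
    (hunif : ∀ u v : Fin M → α, μ (word M ⁻¹' {u}) = μ (word M ⁻¹' {v}))
    (hT : MeasurePreserving T μ μ) (hE : ∀ x ∉ E, T x = replacePrefix M F x) :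
    InjOn F {u | 2 * μ (word M ⁻¹' {u} ∩ E) < μ (word M ⁻¹' {u})} := by
  intro u hu u' hu' hFu
  by_contra hne
  set q := μ (word M ⁻¹' {u})
  have hq' : μ (word M ⁻¹' {u'}) = q := hunif u' u
  have hcover : word M ⁻¹' {u} ∪ word M ⁻¹' {u'} ⊆
      T ⁻¹' (word M ⁻¹' {F u}) ∪ (word M ⁻¹' {u} ∩ E ∪ word M ⁻¹' {u'} ∩ E) := by
    intro x hx
    by_cases hxE : x ∈ E
    · rcases hx with hx | hx
      exacts [Or.inr (Or.inl ⟨hx, hxE⟩), Or.inr (Or.inr ⟨hx, hxE⟩)]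
    · left
      simp only [mem_preimage, mem_singleton_iff, hE x hxE, word_replacePrefix] at hx ⊢
      rcases hx with hx | hx <;> rw [hx]
      exact hFu.symm
  have hsum : q + q ≤ q + (μ (word M ⁻¹' {u} ∩ E) + μ (word M ⁻¹' {u'} ∩ E)) :=
    calc q + q = μ (word M ⁻¹' {u} ∪ word M ⁻¹' {u'}) := by
          rw [measure_union ((disjoint_singleton.2 hne).preimage _)
            (measurableSet_preimage_word_singleton u'), hq']
      _ ≤ μ (T ⁻¹' (word M ⁻¹' {F u})) + μ (word M ⁻¹' {u} ∩ E ∪ word M ⁻¹' {u'} ∩ E) :=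
          (measure_mono hcover).trans (measure_union_le _ _)
      _ ≤ q + (μ (word M ⁻¹' {u} ∩ E) + μ (word M ⁻¹' {u'} ∩ E)) := by
          rw [hT.measure_preimage (measurableSet_preimage_word_singleton _).nullMeasurableSet,
            hunif]
          gcongr
          exact measure_union_le _ _
  have hle := (ENNReal.add_le_add_iff_left (measure_ne_top μ _)).1 hsum
  have : 2 * q < 2 * q :=
    calc 2 * q ≤ 2 * (μ (word M ⁻¹' {u} ∩ E) + μ (word M ⁻¹' {u'} ∩ E)) := by gcongr
      _ = 2 * μ (word M ⁻¹' {u} ∩ E) + 2 * μ (word M ⁻¹' {u'} ∩ E) := by ring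
      _ < q + q := ENNReal.add_lt_add hu (hq' ▸ hu')
      _ = 2 * q := (two_mul q).symm
  exact lt_irrefl _ this

theorem exists_perm_measure_ne_replacePrefix_le [Fintype α]
    (hunif : ∀ u v : Fin M → α, μ (word M ⁻¹' {u}) = μ (word M ⁻¹' {v}))
    (hT : MeasurePreserving T μ μ) (hE : ∀ x ∉ E, T x = replacePrefix M F x) :
    ∃ σ : Equiv.Perm (Fin M → α), μ {x | T x ≠ replacePrefix M σ x} ≤ 3 * μ E := by
  classical
  obtain ⟨σ, hσ⟩ := (injOn_of_two_mul_measure_inter_lt hunif hT hE).exists_perm_eqOn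
  set bad := Finset.univ.filter fun u => μ (word M ⁻¹' {u}) ≤ 2 * μ (word M ⁻¹' {u} ∩ E)
  have hsub : {x | T x ≠ replacePrefix M σ x} ⊆ E ∪ word M ⁻¹' bad := by
    intro x hx
    by_contra! hxE
    simp only [mem_union, mem_preimage, Finset.coe_filter, Finset.mem_univ, true_and,
      mem_ofPred_eq, not_or, not_le, bad] at hxE
    exact hx ((hE x hxE.1).trans (replacePrefix_congr (hσ hxE.2).symm))
  have hbad : μ (word M ⁻¹' bad) ≤ 2 * μ E :=
    calc μ (word M ⁻¹' bad) = ∑ u ∈ bad, μ (word M ⁻¹' {u}) :=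
          (sum_measure_preimage_singleton _ fun u _ =>
            measurableSet_preimage_word_singleton u).symm
      _ ≤ ∑ u ∈ bad, 2 * μ (word M ⁻¹' {u} ∩ E) :=
          Finset.sum_le_sum fun u hu => (Finset.mem_filter.1 hu).2
      _ ≤ ∑ u, 2 * μ (word M ⁻¹' {u} ∩ E) :=
          Finset.sum_le_sum_of_subset (Finset.filter_subset _ _)
      _ = 2 * μ E := by
          rw [← Finset.mul_sum,
            sum_measure_preimage_singleton_inter μ measurableSet_preimage_word_singleton]
  refine ⟨σ, (measure_mono hsub).trans ((measure_union_le _ _).trans ?_)⟩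
  calc μ E + μ (word M ⁻¹' bad) ≤ μ E + 2 * μ E := by gcongr
    _ = 3 * μ E := by ring

end Cylinders

end Measure

end Dyadic

open Dyadic

theorem dyadicMap_eq_replacePrefix (n : ℕ) (σ : Equiv.Perm (Fin n → Bool)) :
    dyadicMap n σ = replacePrefix n σ := rfl

theorem dyadic_permutations_dense_general
    (μ : Measure (ℕ → Bool)) [IsProbabilityMeasure μ]
    (hcyl : ∀ (n : ℕ) (s : Fin n → Bool),
      μ {x : ℕ → Bool | ∀ i : Fin n, x (i : ℕ) = s i} = (1 / 2 : ℝ≥0∞) ^ n)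
    (T : Equiv.Perm (ℕ → Bool))
    (hTmp : MeasurePreserving ⇑T μ μ)
    (hR0 : ∀ᵐ x ∂μ, ∃ N : ℕ, ∀ i ≥ N, T x i = x i) :
    ∀ ε : ℝ≥0∞, 0 < ε →
      ∃ (n : ℕ) (σ : Equiv.Perm (Fin n → Bool)),
        μ {x : ℕ → Bool | T x ≠ dyadicMap n σ x} < ε := by
  intro ε hε
  obtain ⟨δ, hδ, hδε⟩ := ENNReal.exists_pos_mul_lt (a := 6) (by simp) hε.ne'
  obtain ⟨N, hN⟩ := ((tendsto_measure_exists_ge_ne hTmp.measurable measurable_id hR0)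
    |>.eventually_lt_const hδ).exists
  obtain ⟨M, ⟨g, hg⟩, hNM⟩ := ((eventually_exists_measure_ne_comp_word_lt μ
    ((measurable_word N).comp hTmp.measurable) hδ).and (eventually_ge_atTop N)).exists
  have hunif : ∀ u v : Fin M → Bool, μ (word M ⁻¹' {u}) = μ (word M ⁻¹' {v}) := fun u v => by
    rw [preimage_word_singleton, preimage_word_singleton, hcyl, hcyl]
  set E := {x | ∃ i ≥ N, T x i ≠ x i} ∪ {x | word N (T x) ≠ g (word M x)}
  obtain ⟨σ, hσ⟩ := exists_perm_measure_ne_replacePrefix_le (E := E) hunif hTmp fun x hx => by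
    simp only [E, mem_union, mem_ofPred_eq, not_or, not_exists, not_and, not_not] at hx
    exact eq_replacePrefix_of_forall_ge_eq hNM g hx.1 hx.2
  refine ⟨M, σ, ?_⟩
  calc μ {x | T x ≠ dyadicMap M σ x} ≤ 3 * μ E := by rwa [dyadicMap_eq_replacePrefix]
    _ ≤ 3 * (δ + δ) := by gcongr; exact (measure_union_le _ _).trans (add_le_add hN.le hg.le)
    _ = δ * 6 := by ring
    _ < ε := hδε

/-- On `X = {0,1}^ℕ` with the product Bernoulli measure (characterized by its
values on cylinders), every measure-preserving measurable bijection `T` such that `T x`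
eventually agrees with `x` for a.e. `x` can be approximated in the uniform metric by dyadic
permutations. -/
theorem dyadic_permutations_dense
    (μ : Measure (ℕ → Bool)) [IsProbabilityMeasure μ]
    (hcyl : ∀ (n : ℕ) (s : Fin n → Bool),
      μ {x : ℕ → Bool | ∀ i : Fin n, x (i : ℕ) = s i} = (1 / 2 : ℝ≥0∞) ^ n)
    (T : Equiv.Perm (ℕ → Bool))
    (hT1 : Measurable ⇑T) (hT2 : Measurable ⇑T.symm) (hTmp : MeasurePreserving ⇑T μ μ)
    (hR0 : ∀ᵐ x ∂μ, ∃ N : ℕ, ∀ i ≥ N, T x i = x i) :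
    ∀ ε : ℝ≥0∞, 0 < ε →
      ∃ (n : ℕ) (σ : Equiv.Perm (Fin n → Bool)),
        μ {x : ℕ → Bool | T x ≠ dyadicMap n σ x} < ε :=
  dyadic_permutations_dense_general μ hcyl T hTmp hR0
end

section
/- Let X = {0,1}^ℕ with the product measure μ = ⊗_{n∈ℕ}(½δ_0 + ½δ_1), let T_0 be the odometer, and for n ≥ 2 let U_n be the dyadic permutation of X induced by the transposition of {0,1}^n exchanging the words 0^{n-1}1 and 1^{n-1}0. Then for every n ≥ 2 and every permutation σ of {0,1}^n, there exists an element w of the subgroup of bijections of X generated by T_0 and U_n such that w(x) = σ̃(x) for μ-a.e. x ∈ X, where σ̃ is the dyadic permutation induced by σ. -/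
open MeasureTheory
open scoped ENNReal

section Odometer
open Classical
/-- The odometer ("adding one with carry to the right") on `{0,1}^ℕ`, sending the constant-one
sequence to the constant-zero sequence. -/
noncomputable def odometer (x : ℕ → Bool) : ℕ → Bool :=
  if h : ∃ k, x k = false then
    fun i => if i < Nat.find h then false else if i = Nat.find h then true else x i
  else fun _ => false
end Odometer

/-- The binary word `0^(n-1) 1` of length `n`. -/
def word01 (n : ℕ) : Fin n → Bool := fun i => decide ((i : ℕ) = n - 1)

/-- The binary word `1^(n-1) 0` of length `n`. -/
def word10 (n : ℕ) : Fin n → Bool := fun i => !decide ((i : ℕ) = n - 1)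

/-!
Read the first `n` digits of `x` as a binary number, least significant digit first. The odometer
adds one to this number modulo `2 ^ n`, and changes the later digits only when the first `n` digits
are all ones. Hence conjugation by the odometer shifts a dyadic transposition of the words of
values `k, k + 1` to that of the words of values `k + 1, k + 2`, as long as neither is the all-ones
word; the shifts go backwards as well. The transposition defining `U n` exchanges the words of
values `2 ^ (n - 1) - 1` and `2 ^ (n - 1)`, so the group contains the dyadic transpositions of all
pairs of consecutive values, and these generate the symmetric group of `{0,1}^n`.
-/

open Equiv

namespace Equiv.Perm

open Fin.NatCast

theorem eq_top_of_swap_natCast_succ_mem {N : ℕ} [NeZero N] {H : Subgroup (Perm (Fin N))}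
    (hstep : ∀ j, j + 2 < N →
      (swap (j : Fin N) ↑(j + 1) ∈ H ↔ swap (↑(j + 1) : Fin N) ↑(j + 2) ∈ H))
    {j₀ : ℕ} (hj₀ : j₀ + 1 < N) (h₀ : swap (j₀ : Fin N) ↑(j₀ + 1) ∈ H) : H = ⊤ := by
  obtain ⟨m, rfl⟩ : ∃ m, N = m + 1 := Nat.exists_eq_succ_of_ne_zero (NeZero.ne N)
  have iff_zero : ∀ j, j + 1 < m + 1 →
      (swap (j : Fin (m + 1)) ↑(j + 1) ∈ H ↔ swap (0 : Fin (m + 1)) ↑1 ∈ H) := by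
    intro j hj
    induction j with
    | zero => simp
    | succ j ih => rw [← ih (by omega), hstep j (by omega)]
  have hall : ∀ i : Fin m, swap i.castSucc i.succ ∈ H := by
    intro i
    have := (iff_zero i (by omega)).2 ((iff_zero j₀ hj₀).1 h₀)
    convert this using 2 <;> ext <;> simp
  rw [eq_top_iff, ← Subgroup.closure_eq_top_of_mclosure_eq_top (mclosure_swap_castSucc_succ m),
    Subgroup.closure_le]
  rintro _ ⟨i, rfl⟩
  exact hall i

end Equiv.Perm

def initWord (n : ℕ) (x : ℕ → Bool) : Fin n → Bool := fun i => x i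

section Dyadic

variable {n : ℕ}

theorem eq_of_initWord_eq {x y : ℕ → Bool} (h : initWord n x = initWord n y)
    (htail : ∀ i, n ≤ i → x i = y i) : x = y := by
  funext i
  by_cases hi : i < n
  · exact congrFun h ⟨i, hi⟩
  · exact htail i (not_lt.1 hi)

@[simp]
theorem initWord_dyadicMap (σ : Perm (Fin n → Bool)) (x : ℕ → Bool) :
    initWord n (dyadicMap n σ x) = σ (initWord n x) := by
  funext i
  exact dif_pos i.isLt

theorem dyadicMap_apply_of_le (σ : Perm (Fin n → Bool)) (x : ℕ → Bool) {i : ℕ} (hi : n ≤ i) :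
    dyadicMap n σ x i = x i := by
  simp [dyadicMap, not_lt.2 hi]

theorem dyadicMap_eq_self {σ : Perm (Fin n → Bool)} {x : ℕ → Bool}
    (h : σ (initWord n x) = initWord n x) : dyadicMap n σ x = x :=
  eq_of_initWord_eq (by rw [initWord_dyadicMap, h]) fun _ => dyadicMap_apply_of_le σ x

theorem dyadicMap_one (x : ℕ → Bool) : dyadicMap n 1 x = x :=
  dyadicMap_eq_self rfl

theorem dyadicMap_mul (σ τ : Perm (Fin n → Bool)) (x : ℕ → Bool) :
    dyadicMap n (σ * τ) x = dyadicMap n σ (dyadicMap n τ x) :=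
  eq_of_initWord_eq
    (by rw [initWord_dyadicMap, initWord_dyadicMap, initWord_dyadicMap, Perm.mul_apply])
    fun i hi => by simp only [dyadicMap_apply_of_le _ _ hi]

variable (n) in
def dyadicPerm : Perm (Fin n → Bool) →* Perm (ℕ → Bool) where
  toFun σ :=
    { toFun := dyadicMap n σ
      invFun := dyadicMap n σ⁻¹
      left_inv x := by rw [← dyadicMap_mul, inv_mul_cancel, dyadicMap_one]
      right_inv x := by rw [← dyadicMap_mul, mul_inv_cancel, dyadicMap_one] }
  map_one' := Equiv.ext dyadicMap_one
  map_mul' σ τ := Equiv.ext (dyadicMap_mul σ τ)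

@[simp]
theorem dyadicPerm_apply (σ : Perm (Fin n → Bool)) (x : ℕ → Bool) :
    dyadicPerm n σ x = dyadicMap n σ x := rfl

end Dyadic

section Odometer

theorem odometer_zero (x : ℕ → Bool) : odometer x 0 = !x 0 := by
  classical
  by_cases h : ∃ k, x k = false
  · cases hx0 : x 0
    · simp [odometer, h, (Nat.find_eq_zero h).2 hx0]
    · have : Nat.find h ≠ 0 := by simp [Nat.find_eq_zero, hx0]
      simp [odometer, h, Nat.pos_of_ne_zero this]
  · push Not at h
    simp [odometer, h]

theorem odometer_succ (x : ℕ → Bool) (i : ℕ) :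
    odometer x (i + 1) = if x 0 then odometer (fun j => x (j + 1)) i else x (i + 1) := by
  classical
  cases hx0 : x 0
  · have h : ∃ k, x k = false := ⟨0, hx0⟩
    simp [odometer, h, (Nat.find_eq_zero h).2 hx0]
  · by_cases h : ∃ k, x k = false
    · have h' : ∃ k, x (k + 1) = false := by
        obtain ⟨k, hk⟩ := h
        cases k with
        | zero => simp_all
        | succ k => exact ⟨k, hk⟩
      simp [odometer, h, h', Nat.find_comp_succ h h' (by simp [hx0])]
    · have h' : ¬ ∃ k, x (k + 1) = false := fun ⟨k, hk⟩ => h ⟨k + 1, hk⟩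
      simp [odometer, h, h']

theorem odometer_apply_of_le {n : ℕ} {x : ℕ → Bool} (h : initWord n x ≠ fun _ => true) {i : ℕ}
    (hi : n ≤ i) : odometer x i = x i := by
  classical
  obtain ⟨j, hj⟩ : ∃ j : Fin n, x j = false := by
    by_contra! hx
    exact h (funext fun j => by simpa [initWord] using hx j)
  have hx : ∃ k, x k = false := ⟨j, hj⟩
  have : Nat.find hx < n := (Nat.find_min' hx hj).trans_lt j.isLt
  simp [odometer, hx, show ¬ i < Nat.find hx by omega, show i ≠ Nat.find hx by omega]

end Odometer

section BinaryValue

open Finset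

def binaryValue (n : ℕ) (x : ℕ → Bool) : ℕ := ∑ i ∈ range n, (x i).toNat * 2 ^ i

theorem binaryValue_succ (n : ℕ) (x : ℕ → Bool) :
    binaryValue (n + 1) x = (x 0).toNat + 2 * binaryValue n (fun i => x (i + 1)) := by
  rw [binaryValue, sum_range_succ', binaryValue, mul_sum]
  simp only [pow_succ]
  ring_nf

theorem binaryValue_lt (n : ℕ) (x : ℕ → Bool) : binaryValue n x < 2 ^ n := by
  induction n generalizing x with
  | zero => simp [binaryValue]
  | succ n ih =>
    have := ih (fun i => x (i + 1))
    have := Bool.toNat_le (x 0)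
    rw [binaryValue_succ, pow_succ]
    omega

theorem binaryValue_not_add (n : ℕ) (x : ℕ → Bool) :
    binaryValue n (fun i => !x i) + binaryValue n x + 1 = 2 ^ n := by
  induction n generalizing x with
  | zero => simp [binaryValue]
  | succ n ih =>
    have := ih (fun i => x (i + 1))
    rw [binaryValue_succ, binaryValue_succ, pow_succ]
    cases x 0 <;> simp only [Bool.not_true, Bool.not_false, Bool.toNat_true, Bool.toNat_false] <;>
      omega

theorem binaryValue_const_true (n : ℕ) : binaryValue n (fun _ => true) + 1 = 2 ^ n := by
  simpa [binaryValue] using binaryValue_not_add n fun _ => false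

theorem binaryValue_indicator (m : ℕ) : binaryValue (m + 1) (fun i => decide (i = m)) = 2 ^ m := by
  rw [binaryValue, sum_eq_single m (fun i _ hi => by simp [hi]) (by simp)]
  simp

theorem binaryValue_odometer (n : ℕ) (x : ℕ → Bool) :
    binaryValue n (odometer x) = (binaryValue n x + 1) % 2 ^ n := by
  induction n generalizing x with
  | zero => simp [binaryValue]
  | succ n ih =>
    set v := binaryValue n (fun i => x (i + 1))
    have hv : v < 2 ^ n := binaryValue_lt n _
    simp only [binaryValue_succ, odometer_zero, odometer_succ, pow_succ]
    cases x 0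
    · simp only [Bool.not_false, Bool.toNat_true, Bool.toNat_false, Bool.false_eq_true,
        ↓reduceIte]
      rw [Nat.mod_eq_of_lt (by omega)]
      omega
    · simp only [Bool.not_true, Bool.toNat_false, Bool.toNat_true, ↓reduceIte, ih]
      rw [show 1 + 2 * v + 1 = 2 * (v + 1) by ring, mul_comm _ 2, Nat.mul_mod_mul_left, zero_add]

end BinaryValue

section Words

variable {n : ℕ}

variable (n) in
def binaryEquiv : (Fin n → Bool) ≃ Fin (2 ^ n) :=
  (Equiv.arrowCongr (Equiv.refl _) finTwoEquiv.symm).trans finFunctionFinEquiv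

theorem val_binaryEquiv_initWord (x : ℕ → Bool) :
    (binaryEquiv n (initWord n x) : ℕ) = binaryValue n x := by
  rw [binaryEquiv, Equiv.trans_apply, finFunctionFinEquiv_apply, binaryValue,
    ← Fin.sum_univ_eq_sum_range (fun i => (x i).toNat * 2 ^ i)]
  refine Finset.sum_congr rfl fun i _ => ?_
  cases h : x i <;> simp [initWord, Equiv.arrowCongr, finTwoEquiv, h]

variable (n) in
def wordSucc : Perm (Fin n → Bool) := (binaryEquiv n).symm.permCongr (finRotate (2 ^ n))

theorem initWord_odometer (x : ℕ → Bool) :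
    initWord n (odometer x) = wordSucc n (initWord n x) := by
  rw [wordSucc, permCongr_apply, Equiv.symm_symm, Equiv.eq_symm_apply, finRotate_apply]
  ext
  rw [Fin.val_add, val_binaryEquiv_initWord, val_binaryEquiv_initWord, binaryValue_odometer]
  simp

open Fin.NatCast in
def wordOfNat (n k : ℕ) : Fin n → Bool := (binaryEquiv n).symm k

open Fin.NatCast in
theorem wordOfNat_eq_iff {k : ℕ} {s : Fin n → Bool} (hk : k < 2 ^ n) :
    wordOfNat n k = s ↔ (binaryEquiv n s : ℕ) = k := by
  rw [wordOfNat, Equiv.symm_apply_eq, Fin.ext_iff, Fin.val_natCast, Nat.mod_eq_of_lt hk, eq_comm]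

open Fin.NatCast in
theorem wordSucc_wordOfNat (k : ℕ) : wordSucc n (wordOfNat n k) = wordOfNat n (k + 1) := by
  simp [wordSucc, wordOfNat, finRotate_apply, Nat.cast_succ]

theorem wordOfNat_ne_true {k : ℕ} (hk : k + 1 < 2 ^ n) : wordOfNat n k ≠ fun _ => true := by
  have := binaryValue_const_true n
  rw [Ne, wordOfNat_eq_iff (by omega), show (fun _ => true) = initWord n fun _ => true from rfl,
    val_binaryEquiv_initWord]
  omega

theorem word10_eq_wordOfNat (m : ℕ) : word10 (m + 1) = wordOfNat (m + 1) (2 ^ m - 1) := by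
  rw [eq_comm, wordOfNat_eq_iff ((Nat.sub_le _ _).trans_lt (Nat.pow_lt_pow_succ one_lt_two))]
  have := binaryValue_not_add (m + 1) fun i => decide (i = m)
  rw [binaryValue_indicator, pow_succ] at this
  exact (val_binaryEquiv_initWord (fun i => !decide (i = m))).trans (by omega)

theorem word01_eq_wordOfNat (m : ℕ) : word01 (m + 1) = wordOfNat (m + 1) (2 ^ m) := by
  rw [eq_comm, wordOfNat_eq_iff (Nat.pow_lt_pow_succ one_lt_two)]
  exact (val_binaryEquiv_initWord (fun i => decide (i = m))).trans (binaryValue_indicator m)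

end Words

section Conjugation

variable {n : ℕ}

-- A carry past digit `n` only happens from the all-ones prefix, which `τ` fixes.
theorem odometer_dyadicMap {τ : Perm (Fin n → Bool)} (hτ : τ (fun _ => true) = fun _ => true)
    (x : ℕ → Bool) :
    odometer (dyadicMap n τ x) = dyadicMap n (wordSucc n * τ * (wordSucc n)⁻¹) (odometer x) := by
  refine eq_of_initWord_eq (n := n) (by simp [initWord_odometer]) fun i hi => ?_
  rw [dyadicMap_apply_of_le _ _ hi]
  by_cases hx : initWord n x = fun _ => true
  · rw [dyadicMap_eq_self (hx ▸ hτ)]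
  · have hτx : initWord n (dyadicMap n τ x) ≠ fun _ => true := by
      rw [initWord_dyadicMap, ← hτ]
      exact τ.injective.ne hx
    rw [odometer_apply_of_le hτx hi, odometer_apply_of_le hx hi, dyadicMap_apply_of_le _ _ hi]

theorem conj_dyadicPerm {t : Perm (ℕ → Bool)} (ht : ∀ x, t x = odometer x)
    {τ : Perm (Fin n → Bool)} (hτ : τ (fun _ => true) = fun _ => true) :
    t * dyadicPerm n τ * t⁻¹ = dyadicPerm n (wordSucc n * τ * (wordSucc n)⁻¹) := by
  rw [mul_inv_eq_iff_eq_mul]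
  ext x : 1
  simp only [Perm.mul_apply, dyadicPerm_apply, ht, odometer_dyadicMap hτ]

end Conjugation

theorem dyadicPerm_mem_of_odometer_mem {n : ℕ} {G : Subgroup (Perm (ℕ → Bool))}
    {t : Perm (ℕ → Bool)} (ht : ∀ x, t x = odometer x) (htG : t ∈ G) {k : ℕ} (hk : k + 1 < 2 ^ n)
    (hswap : dyadicPerm n (swap (wordOfNat n k) (wordOfNat n (k + 1))) ∈ G)
    (σ : Perm (Fin n → Bool)) : dyadicPerm n σ ∈ G := by
  let H := G.comap ((dyadicPerm n).comp (permCongrHom (binaryEquiv n).symm).toMonoidHom)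
  have mem_H (i j : Fin (2 ^ n)) :
      swap i j ∈ H ↔ dyadicPerm n (swap ((binaryEquiv n).symm i) ((binaryEquiv n).symm j)) ∈ G := by
    change dyadicPerm n ((binaryEquiv n).symm.permCongr (swap i j)) ∈ G ↔ _
    rw [permCongr_def, symm_trans_swap_trans]
  have hH : H = ⊤ := by
    refine Perm.eq_top_of_swap_natCast_succ_mem (fun j hj => ?_) hk ((mem_H _ _).2 hswap)
    have hfix : swap (wordOfNat n j) (wordOfNat n (j + 1)) (fun _ => true) = fun _ => true :=
      swap_apply_of_ne_of_ne (wordOfNat_ne_true (by omega)).symm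
        (wordOfNat_ne_true (by omega)).symm
    rw [mem_H, mem_H]
    change dyadicPerm n (swap (wordOfNat n j) (wordOfNat n (j + 1))) ∈ G ↔
      dyadicPerm n (swap (wordOfNat n (j + 1)) (wordOfNat n (j + 1 + 1))) ∈ G
    have hconj : swap (wordOfNat n (j + 1)) (wordOfNat n (j + 1 + 1)) =
        wordSucc n * swap (wordOfNat n j) (wordOfNat n (j + 1)) * (wordSucc n)⁻¹ := by
      rw [← swap_apply_apply, wordSucc_wordOfNat, wordSucc_wordOfNat]
    rw [hconj, ← conj_dyadicPerm ht hfix, G.mul_mem_cancel_right (G.inv_mem htG),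
      G.mul_mem_cancel_left htG]
  have hσ : (binaryEquiv n).permCongr σ ∈ H := hH ▸ Subgroup.mem_top _
  change dyadicPerm n ((binaryEquiv n).permCongr.symm ((binaryEquiv n).permCongr σ)) ∈ G at hσ
  rwa [symm_apply_apply] at hσ

theorem dyadic_permutation_mem_closure_odometer_transposition_general
    (μ : Measure (ℕ → Bool))
    (t : Equiv.Perm (ℕ → Bool)) (ht : ∀ x, t x = odometer x)
    (n : ℕ) (hn : 2 ≤ n)
    (u : Equiv.Perm (ℕ → Bool))
    (hu : ∀ x, u x = dyadicMap n (Equiv.swap (word01 n) (word10 n)) x)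
    (σ : Equiv.Perm (Fin n → Bool)) :
    ∃ w ∈ Subgroup.closure ({t, u} : Set (Equiv.Perm (ℕ → Bool))),
      ∀ᵐ x ∂μ, w x = dyadicMap n σ x := by
  obtain ⟨m, rfl⟩ : ∃ m, n = m + 1 := ⟨n - 1, by omega⟩
  have hm : 2 ^ m - 1 + 1 = 2 ^ m := Nat.sub_add_cancel Nat.one_le_two_pow
  have hu' : u = dyadicPerm (m + 1)
      (swap (wordOfNat (m + 1) (2 ^ m - 1)) (wordOfNat (m + 1) (2 ^ m - 1 + 1))) := by
    ext x : 1
    rw [hu, hm, ← word10_eq_wordOfNat, ← word01_eq_wordOfNat, swap_comm]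
    rfl
  subst hu'
  refine ⟨dyadicPerm (m + 1) σ, ?_, ae_of_all μ fun _ => rfl⟩
  exact dyadicPerm_mem_of_odometer_mem ht (Subgroup.subset_closure (by simp))
    (k := 2 ^ m - 1) (by rw [hm]; exact Nat.pow_lt_pow_succ one_lt_two)
    (Subgroup.subset_closure (by simp)) σ

/-- Let `t` be the odometer and, for `n ≥ 2`, let `u` be the dyadic permutation
`U n` induced by the transposition of `{0,1}^n` exchanging `0^(n-1) 1` and `1^(n-1) 0`. Then
for every permutation `σ` of `{0,1}^n`, the induced dyadic permutation of `{0,1}^ℕ` agrees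
μ-a.e. with some element of the subgroup generated by `t` and `u`, where `μ` is the product
Bernoulli measure (characterized by its values on cylinders). -/
theorem dyadic_permutation_mem_closure_odometer_transposition
    (μ : Measure (ℕ → Bool)) [IsProbabilityMeasure μ]
    (hcyl : ∀ (n : ℕ) (s : Fin n → Bool),
      μ {x : ℕ → Bool | ∀ i : Fin n, x (i : ℕ) = s i} = (1 / 2 : ℝ≥0∞) ^ n)
    (t : Equiv.Perm (ℕ → Bool)) (ht : ∀ x, t x = odometer x)
    (n : ℕ) (hn : 2 ≤ n)
    (u : Equiv.Perm (ℕ → Bool))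
    (hu : ∀ x, u x = dyadicMap n (Equiv.swap (word01 n) (word10 n)) x)
    (σ : Equiv.Perm (Fin n → Bool)) :
    ∃ w ∈ Subgroup.closure ({t, u} : Set (Equiv.Perm (ℕ → Bool))),
      ∀ᵐ x ∂μ, w x = dyadicMap n σ x :=
  dyadic_permutation_mem_closure_odometer_transposition_general μ t ht n hn u hu σ
end

section
/- Let (X,μ) be a standard probability space and let T, U be measure-preserving measurable bijections of X with disjoint supports, i.e. {x : T(x) ≠ x} ∩ {x : U(x) ≠ x} = ∅. Suppose there are two relatively prime integers p, q ≥ 2 such that for μ-a.e. x the T-orbit of x is finite with cardinality dividing a power of p, and for μ-a.e. x the U-orbit of x is finite with cardinality dividing a power of q. Then both T and U belong to the closure of the group generated by TU in the uniform topology: for every ε > 0 there exist n, m ∈ ℕ with μ({x : (TU)^n(x) ≠ T(x)}) < ε and μ({x : (TU)^m(x) ≠ U(x)}) < ε. -/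
/-!
Disjoint supports make `T` and `U` commute, so `(T * U) ^ n = T ^ n * U ^ n`. At a point fixed by
both `T ^ p ^ J` and `U ^ q ^ J`, an exponent `n ≡ 1 [MOD p ^ J]`, `n ≡ 0 [MOD q ^ J]` (Chinese
remainder theorem) gives `(T * U) ^ n x = T x`. The orbit hypotheses say that the sets of points
moved by `T ^ p ^ J` (resp. `U ^ q ^ J`) decrease to a null set, so their measures tend to `0`.
-/

open MeasureTheory Filter Topology
open scoped ENNReal

namespace Equiv.Perm

variable {α : Type*}

lemma disjoint_of_inter_setOf_ne_eq_empty {f g : Perm α}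
    (h : {x | f x ≠ x} ∩ {x | g x ≠ x} = ∅) : f.Disjoint g := by
  intro x
  by_contra! hx
  exact h.subset ⟨hx.1, hx.2⟩

lemma setOf_zpow_apply_eq_orbit_zpowers (g : Perm α) (x : α) :
    {y | ∃ n : ℤ, (g ^ n) x = y} = MulAction.orbit (Subgroup.zpowers g) x := by
  ext y
  constructor
  · rintro ⟨n, rfl⟩
    exact ⟨⟨g ^ n, n, rfl⟩, rfl⟩
  · rintro ⟨⟨_, n, rfl⟩, rfl⟩
    exact ⟨n, rfl⟩

lemma period_eq_ncard_orbit {g : Perm α} {x : α} (hfin : {y | ∃ n : ℤ, (g ^ n) x = y}.Finite) :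
    MulAction.period g x = {y | ∃ n : ℤ, (g ^ n) x = y}.ncard := by
  rw [setOf_zpow_apply_eq_orbit_zpowers] at hfin ⊢
  have := hfin.fintype
  rw [Set.ncard_eq_toFinset_card', Set.toFinset_card, ← MulAction.minimalPeriod_eq_card]
  rfl

lemma pow_apply_eq_self_of_ncard_orbit_dvd {g : Perm α} {x : α} {k : ℕ}
    (hfin : {y | ∃ n : ℤ, (g ^ n) x = y}.Finite)
    (hdvd : {y | ∃ n : ℤ, (g ^ n) x = y}.ncard ∣ k) : (g ^ k) x = x :=
  (MulAction.pow_smul_eq_iff_period_dvd (m := g) (a := x)).2 (period_eq_ncard_orbit hfin ▸ hdvd)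

lemma pow_apply_eq_of_modEq {g : Perm α} {x : α} {a m n : ℕ} (hx : (g ^ a) x = x)
    (hmn : m ≡ n [MOD a]) : (g ^ m) x = (g ^ n) x := by
  have hmn' := hmn.of_dvd ((MulAction.pow_smul_eq_iff_period_dvd (m := g) (a := x)).1 hx)
  change g ^ m • x = g ^ n • x
  rw [← MulAction.pow_mod_period_smul m, hmn', MulAction.pow_mod_period_smul]

lemma setOf_mul_pow_apply_ne_left_subset {f g : Perm α} (hfg : Commute f g) {a b n : ℕ}
    (hna : n ≡ 1 [MOD a]) (hnb : n ≡ 0 [MOD b]) :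
    {x | ((f * g) ^ n) x ≠ f x} ⊆ {x | (f ^ a) x ≠ x} ∪ {x | (g ^ b) x ≠ x} := by
  intro x hx
  by_contra! hfix
  simp only [Set.mem_union, Set.mem_ofPred_eq, not_or, not_not] at hfix
  apply hx
  rw [hfg.mul_pow, mul_apply, pow_apply_eq_of_modEq hfix.2 hnb, pow_zero, one_apply,
    pow_apply_eq_of_modEq hfix.1 hna, pow_one]

end Equiv.Perm

section

variable {X : Type*} [MeasurableSpace X] [MeasurableEq X] {μ : Measure X} [IsFiniteMeasure μ]

lemma measurableSet_setOf_pow_apply_ne {g : Equiv.Perm X} (hg : Measurable g) (k : ℕ) :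
    MeasurableSet {x | (g ^ k) x ≠ x} := by
  rw [← Equiv.Perm.iterate_eq_pow]
  exact (measurableSet_eq_fun (hg.iterate k) measurable_id).compl

lemma tendsto_measure_setOf_pow_pow_apply_ne {g : Equiv.Perm X} (hg : Measurable g) {r : ℕ}
    (h : ∀ᵐ x ∂μ, ∃ j, (g ^ r ^ j) x = x) :
    Tendsto (fun J ↦ μ {x | (g ^ r ^ J) x ≠ x}) atTop (𝓝 0) := by
  have hanti : Antitone fun J ↦ {x | (g ^ r ^ J) x ≠ x} := fun i j hij x hx hfix ↦ hx <| by
    rw [Equiv.Perm.pow_apply_eq_of_modEq hfix (Nat.modEq_zero_iff_dvd.2 (pow_dvd_pow r hij)),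
      pow_zero, Equiv.Perm.one_apply]
  have hnull : μ (⋂ J, {x | (g ^ r ^ J) x ≠ x}) = 0 := by
    refine measure_mono_null ?_ (ae_iff.1 h)
    exact fun x hx ⟨j, hj⟩ ↦ Set.mem_iInter.1 hx j hj
  have := tendsto_measure_iInter_atTop
    (fun J ↦ (measurableSet_setOf_pow_apply_ne hg (r ^ J)).nullMeasurableSet) hanti
    ⟨0, measure_ne_top μ _⟩
  rwa [hnull] at this

end

theorem mem_closure_of_disjoint_supports_coprime_orbits_general
    {X : Type*} [MeasurableSpace X] [StandardBorelSpace X]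
    (μ : Measure X) [IsProbabilityMeasure μ]
    (T U : Equiv.Perm X)
    (hT1 : Measurable ⇑T)
    (hU1 : Measurable ⇑U)
    (hdisj : {x : X | T x ≠ x} ∩ {x : X | U x ≠ x} = ∅)
    (p q : ℕ) (hpq : Nat.Coprime p q)
    (hTorb : ∀ᵐ x ∂μ, ∃ j : ℕ, {y : X | ∃ n : ℤ, (T ^ n) x = y}.Finite ∧
      {y : X | ∃ n : ℤ, (T ^ n) x = y}.ncard ∣ p ^ j)
    (hUorb : ∀ᵐ x ∂μ, ∃ j : ℕ, {y : X | ∃ n : ℤ, (U ^ n) x = y}.Finite ∧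
      {y : X | ∃ n : ℤ, (U ^ n) x = y}.ncard ∣ q ^ j) :
    ∀ ε : ℝ≥0∞, 0 < ε →
      (∃ n : ℕ, μ {x : X | ((T * U) ^ n) x ≠ T x} < ε) ∧
      (∃ m : ℕ, μ {x : X | ((T * U) ^ m) x ≠ U x} < ε) := by
  intro ε hε
  have hcomm : Commute T U := (Equiv.Perm.disjoint_of_inter_setOf_ne_eq_empty hdisj).commute
  have hTper : ∀ᵐ x ∂μ, ∃ j, (T ^ p ^ j) x = x := hTorb.mono fun _ ⟨j, hfin, hdvd⟩ ↦
    ⟨j, Equiv.Perm.pow_apply_eq_self_of_ncard_orbit_dvd hfin hdvd⟩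
  have hUper : ∀ᵐ x ∂μ, ∃ j, (U ^ q ^ j) x = x := hUorb.mono fun _ ⟨j, hfin, hdvd⟩ ↦
    ⟨j, Equiv.Perm.pow_apply_eq_self_of_ncard_orbit_dvd hfin hdvd⟩
  have hε2 : 0 < ε / 2 := ENNReal.half_pos hε.ne'
  obtain ⟨J, hTJ, hUJ⟩ :=
    (((tendsto_measure_setOf_pow_pow_apply_ne hT1 hTper).eventually_lt_const hε2).and
      ((tendsto_measure_setOf_pow_pow_apply_ne hU1 hUper).eventually_lt_const hε2)).exists
  have hsmall : ∀ S ⊆ {x | (T ^ p ^ J) x ≠ x} ∪ {x | (U ^ q ^ J) x ≠ x}, μ S < ε :=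
    fun S hS ↦ calc
      μ S ≤ μ {x | (T ^ p ^ J) x ≠ x} + μ {x | (U ^ q ^ J) x ≠ x} :=
        (measure_mono hS).trans (measure_union_le _ _)
      _ < ε / 2 + ε / 2 := ENNReal.add_lt_add hTJ hUJ
      _ = ε := ENNReal.add_halves ε
  have hcop : (p ^ J).Coprime (q ^ J) := hpq.pow J J
  obtain ⟨n, hn1, hn0⟩ := Nat.chineseRemainder hcop 1 0
  obtain ⟨m, hm0, hm1⟩ := Nat.chineseRemainder hcop 0 1
  refine ⟨⟨n, hsmall _ (Equiv.Perm.setOf_mul_pow_apply_ne_left_subset hcomm hn1 hn0)⟩,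
    ⟨m, hsmall _ ?_⟩⟩
  rw [hcomm.eq, Set.union_comm]
  exact Equiv.Perm.setOf_mul_pow_apply_ne_left_subset hcomm.symm hm1 hm0

/-- If `T, U` are measure-preserving bijections with disjoint supports whose
orbits are a.e. finite with cardinalities dividing powers of two relatively prime integers
`p, q ≥ 2`, then `T` and `U` lie in the uniform closure of the cyclic group generated by
`T * U`. -/
theorem mem_closure_of_disjoint_supports_coprime_orbits
    {X : Type*} [MeasurableSpace X] [StandardBorelSpace X]
    (μ : Measure X) [IsProbabilityMeasure μ]
    (T U : Equiv.Perm X)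
    (hT1 : Measurable ⇑T) (hT2 : Measurable ⇑T.symm) (hTmp : MeasurePreserving ⇑T μ μ)
    (hU1 : Measurable ⇑U) (hU2 : Measurable ⇑U.symm) (hUmp : MeasurePreserving ⇑U μ μ)
    (hdisj : {x : X | T x ≠ x} ∩ {x : X | U x ≠ x} = ∅)
    (p q : ℕ) (hp : 2 ≤ p) (hq : 2 ≤ q) (hpq : Nat.Coprime p q)
    (hTorb : ∀ᵐ x ∂μ, ∃ j : ℕ, {y : X | ∃ n : ℤ, (T ^ n) x = y}.Finite ∧
      {y : X | ∃ n : ℤ, (T ^ n) x = y}.ncard ∣ p ^ j)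
    (hUorb : ∀ᵐ x ∂μ, ∃ j : ℕ, {y : X | ∃ n : ℤ, (U ^ n) x = y}.Finite ∧
      {y : X | ∃ n : ℤ, (U ^ n) x = y}.ncard ∣ q ^ j) :
    ∀ ε : ℝ≥0∞, 0 < ε →
      (∃ n : ℕ, μ {x : X | ((T * U) ^ n) x ≠ T x} < ε) ∧
      (∃ m : ℕ, μ {x : X | ((T * U) ^ m) x ≠ U x} < ε) :=
  mem_closure_of_disjoint_supports_coprime_orbits_general μ T U hT1 hU1 hdisj p q hpq hTorb hUorb
end

section
/- Let (X,μ) be a standard probability space and let T_1, …, T_n be measure-preserving measurable bijections of X whose supports {x : T_k(x) ≠ x} are pairwise disjoint. Suppose there are pairwise relatively prime integers p_1, …, p_n ≥ 2 such that for each k ∈ {1,…,n} and μ-a.e. x, the T_k-orbit of x is finite with cardinality dividing a power of p_k. Then for every k ∈ {1,…,n}, T_k belongs to the closure of the group generated by the product T_1 T_2 ⋯ T_n in the uniform topology: for every ε > 0 there exists m ∈ ℕ with μ({x : (T_1 T_2 ⋯ T_n)^m(x) ≠ T_k(x)}) < ε. -/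
/-!
Choose `J` so large that, off a set of measure `< ε`, every point is periodic for each `T i`
with period `p i ^ J`; this is possible because the orbit sizes divide powers of the `p i`. By
the Chinese remainder theorem there is `m` with `m ≡ 1 [MOD p k ^ J]` and `p i ^ J ∣ m` for
`i ≠ k`. The `T i` have disjoint supports, so they commute and
`(T 1 ⋯ T n) ^ m = T 1 ^ m ⋯ T n ^ m`; on the good set `T i ^ m` is the identity for `i ≠ k`
while `T k ^ m = T k`.
-/

open MeasureTheory Function
open scoped ENNReal

theorem List.prod_pow_of_pairwise_commute {M : Type*} [Monoid M] {l : List M}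
    (hl : l.Pairwise Commute) (m : ℕ) : l.prod ^ m = (l.map (· ^ m)).prod := by
  induction l with
  | nil => simp
  | cons a l ih =>
    rw [List.pairwise_cons] at hl
    rw [List.prod_cons, List.map_cons, List.prod_cons, ← ih hl.2,
      (Commute.list_prod_right l a hl.1).mul_pow]

theorem Nat.exists_modEq_one_and_dvd_of_pairwise_coprime {ι : Type*} [Fintype ι] {q : ι → ℕ}
    (hq : Pairwise (Nat.Coprime on q)) (k : ι) :
    ∃ m, m ≡ 1 [MOD q k] ∧ ∀ i ≠ k, q i ∣ m := by
  classical
  have hco : Nat.Coprime (∏ i ∈ Finset.univ.erase k, q i) (q k) :=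
    Nat.Coprime.prod_left fun i hi => hq (Finset.ne_of_mem_erase hi)
  obtain ⟨m, hm0, hm1⟩ := Nat.chineseRemainder hco 0 1
  exact ⟨m, hm1, fun i hi => (Finset.dvd_prod_of_mem q (Finset.mem_erase.2
    ⟨hi, Finset.mem_univ i⟩)).trans (Nat.modEq_zero_iff_dvd.1 hm0)⟩

theorem Function.IsPeriodicPt.iterate_eq_of_modEq {α : Type*} {f : α → α} {n a b : ℕ}
    {x : α} (h : IsPeriodicPt f n x) (hab : a ≡ b [MOD n]) : f^[a] x = f^[b] x := by
  rw [← h.iterate_mod_apply a, ← h.iterate_mod_apply b, hab]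

theorem Measurable.measurableSet_isPeriodicPt {α : Type*} [MeasurableSpace α] [MeasurableEq α]
    {f : α → α} (hf : Measurable f) (n : ℕ) : MeasurableSet {x | IsPeriodicPt f n x} :=
  measurableSet_eq_fun (hf.iterate n) measurable_id

theorem MeasureTheory.exists_measure_compl_lt_of_monotone {X : Type*} [MeasurableSpace X]
    {μ : Measure X} [IsFiniteMeasure μ] {s : ℕ → Set X} (hs : ∀ J, MeasurableSet (s J))
    (hmono : Monotone s) (hae : ∀ᵐ x ∂μ, x ∈ ⋃ J, s J) {ε : ℝ≥0∞} (hε : 0 < ε) :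
    ∃ J, μ (s J)ᶜ < ε := by
  have htend := tendsto_measure_iInter_atTop (μ := μ) (fun J => (hs J).compl.nullMeasurableSet)
    (fun _ _ h => Set.compl_subset_compl.2 (hmono h)) ⟨0, measure_ne_top μ _⟩
  have hnull : μ (⋃ J, s J)ᶜ = 0 := ae_iff.1 hae
  rw [← Set.compl_iUnion, hnull] at htend
  exact (htend.eventually (gt_mem_nhds hε)).exists

namespace Equiv.Perm

variable {X : Type*}

theorem isPeriodicPt_ncard_orbit (σ : Perm X) {x : X}
    (h : {y | ∃ i : ℤ, (σ ^ i) x = y}.Finite) :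
    IsPeriodicPt σ {y | ∃ i : ℤ, (σ ^ i) x = y}.ncard x := by
  have horbit : {y | ∃ i : ℤ, (σ ^ i) x = y} = MulAction.orbit (Subgroup.zpowers σ) x := by
    ext y
    simp [MulAction.mem_orbit_iff, Subgroup.exists_zpowers, Subgroup.smul_def, Perm.smul_def]
  rw [horbit] at h ⊢
  have := h.fintype
  rw [Set.ncard_eq_toFinset_card', Set.toFinset_card, ← MulAction.minimalPeriod_eq_card]
  exact isPeriodicPt_minimalPeriod _ _

theorem disjoint_iff_disjoint_setOf_ne {f g : Perm X} :
    f.Disjoint g ↔ _root_.Disjoint {x | f x ≠ x} {x | g x ≠ x} := by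
  simp only [Perm.Disjoint, Set.disjoint_left, Set.mem_ofPred_eq, not_not, or_iff_not_imp_left]

theorem prod_apply_of_mem_of_pairwise_disjoint {l : List (Perm X)} (hl : l.Pairwise Disjoint)
    {σ : Perm X} (hσ : σ ∈ l) {x : X} (hx : σ x ≠ x) : l.prod x = σ x := by
  induction l with
  | nil => simp at hσ
  | cons τ l ih =>
    rw [List.pairwise_cons] at hl
    rw [List.prod_cons, mul_apply]
    rcases List.mem_cons.1 hσ with rfl | hσ
    · rw [((disjoint_prod_right l hl.1) x).resolve_left hx]
    · rw [ih hl.2 hσ, ((hl.1 σ hσ) (σ x)).resolve_right fun h => hx (σ.injective h)]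

theorem ofFn_prod_pow_apply_of_pairwise_disjoint {n : ℕ} {T : Fin n → Perm X}
    (hT : Pairwise fun i j => (T i).Disjoint (T j)) {k : Fin n} {m : ℕ} {x : X}
    (hfix : ∀ i ≠ k, (T i ^ m) x = x) (hk : (T k ^ m) x = T k x) :
    ((List.ofFn T).prod ^ m) x = T k x := by
  have hpow : (List.ofFn T).prod ^ m = (List.ofFn fun i => T i ^ m).prod := by
    rw [List.prod_pow_of_pairwise_commute
      (List.pairwise_ofFn.2 fun i j hij => (hT hij.ne).commute), List.map_ofFn]
    rfl
  rw [hpow]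
  by_cases hkx : T k x = x
  · rw [hkx]
    refine (MulAction.stabilizer (Perm X) x).list_prod_mem fun σ hσ => ?_
    obtain ⟨i, rfl⟩ := List.mem_ofFn.1 hσ
    rw [MulAction.mem_stabilizer_iff, Perm.smul_def]
    rcases eq_or_ne i k with rfl | hi
    · rw [hk, hkx]
    · exact hfix i hi
  · rw [← hk] at hkx ⊢
    exact prod_apply_of_mem_of_pairwise_disjoint
      (List.pairwise_ofFn.2 fun i j hij => (hT hij.ne).pow_disjoint_pow m m)
      (List.mem_ofFn.2 ⟨k, rfl⟩) hkx

end Equiv.Perm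

theorem mem_closure_of_pairwise_disjoint_supports_coprime_orbits_general
    {X : Type*} [MeasurableSpace X] [StandardBorelSpace X]
    (μ : Measure X) [IsProbabilityMeasure μ]
    (n : ℕ) (T : Fin n → Equiv.Perm X)
    (hmeas : ∀ k, Measurable ⇑(T k) ∧ Measurable ⇑(T k).symm ∧ MeasurePreserving ⇑(T k) μ μ)
    (hdisj : ∀ k k' : Fin n, k ≠ k' →
      Disjoint {x : X | T k x ≠ x} {x : X | T k' x ≠ x})
    (p : Fin n → ℕ)
    (hcop : ∀ k k' : Fin n, k ≠ k' → Nat.Coprime (p k) (p k'))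
    (horb : ∀ k, ∀ᵐ x ∂μ, ∃ j : ℕ, {y : X | ∃ i : ℤ, (T k ^ i) x = y}.Finite ∧
      {y : X | ∃ i : ℤ, (T k ^ i) x = y}.ncard ∣ p k ^ j) :
    ∀ k : Fin n, ∀ ε : ℝ≥0∞, 0 < ε →
      ∃ m : ℕ, μ {x : X | ((List.ofFn T).prod ^ m) x ≠ T k x} < ε := by
  intro k ε hε
  set good : ℕ → Set X := fun J => {x | ∀ i, IsPeriodicPt (T i) (p i ^ J) x}
  have hgood_mono : Monotone good := fun J J' hJ x hx i =>
    (hx i).trans_dvd (pow_dvd_pow _ hJ)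
  have hgood_ae : ∀ᵐ x ∂μ, x ∈ ⋃ J, good J := by
    filter_upwards [ae_all_iff.2 horb] with x hx
    choose j hfin hdvd using hx
    refine Set.mem_iUnion.2 ⟨Finset.univ.sup j, fun i => ?_⟩
    exact ((T i).isPeriodicPt_ncard_orbit (hfin i)).trans_dvd
      ((hdvd i).trans (pow_dvd_pow _ (Finset.le_sup (Finset.mem_univ i))))
  have hgood_meas : ∀ J, MeasurableSet (good J) := fun J => by
    simp only [good, Set.ofPred_forall]
    exact .iInter fun i => (hmeas i).1.measurableSet_isPeriodicPt _
  obtain ⟨J, hJ⟩ := exists_measure_compl_lt_of_monotone hgood_meas hgood_mono hgood_ae hε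
  obtain ⟨m, hm1, hmdvd⟩ := Nat.exists_modEq_one_and_dvd_of_pairwise_coprime
    (q := fun i => p i ^ J) (fun i j hij => (hcop i j hij).pow J J) k
  refine ⟨m, (measure_mono fun x (hx : _ ≠ _) (hxgood : x ∈ good J) => hx ?_).trans_lt hJ⟩
  refine Equiv.Perm.ofFn_prod_pow_apply_of_pairwise_disjoint
    (fun i j hij => Equiv.Perm.disjoint_iff_disjoint_setOf_ne.2 (hdisj i j hij))
    (fun i hi => ?_) ?_ <;>
    rw [← Equiv.Perm.iterate_eq_pow]
  · exact (hxgood i).trans_dvd (hmdvd i hi)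
  · exact (hxgood k).iterate_eq_of_modEq hm1

/-- If `T 1, …, T n` are measure-preserving bijections with pairwise disjoint
supports whose orbits are a.e. finite with cardinalities dividing powers of pairwise relatively
prime integers `p 1, …, p n ≥ 2`, then each `T k` lies in the uniform closure of the cyclic
group generated by the product `T 1 * T 2 * ⋯ * T n`. -/
theorem mem_closure_of_pairwise_disjoint_supports_coprime_orbits
    {X : Type*} [MeasurableSpace X] [StandardBorelSpace X]
    (μ : Measure X) [IsProbabilityMeasure μ]
    (n : ℕ) (T : Fin n → Equiv.Perm X)
    (hmeas : ∀ k, Measurable ⇑(T k) ∧ Measurable ⇑(T k).symm ∧ MeasurePreserving ⇑(T k) μ μ)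
    (hdisj : ∀ k k' : Fin n, k ≠ k' →
      Disjoint {x : X | T k x ≠ x} {x : X | T k' x ≠ x})
    (p : Fin n → ℕ) (hp : ∀ k, 2 ≤ p k)
    (hcop : ∀ k k' : Fin n, k ≠ k' → Nat.Coprime (p k) (p k'))
    (horb : ∀ k, ∀ᵐ x ∂μ, ∃ j : ℕ, {y : X | ∃ i : ℤ, (T k ^ i) x = y}.Finite ∧
      {y : X | ∃ i : ℤ, (T k ^ i) x = y}.ncard ∣ p k ^ j) :
    ∀ k : Fin n, ∀ ε : ℝ≥0∞, 0 < ε →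
      ∃ m : ℕ, μ {x : X | ((List.ofFn T).prod ^ m) x ≠ T k x} < ε :=
  mem_closure_of_pairwise_disjoint_supports_coprime_orbits_general μ n T hmeas hdisj p hcop horb
end
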